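/- arXiv:1405.2214 — 11 statements merged into one kernel-verified Lean document; each statement's English description precedes it below -/
import Mathlib

section
/- Let Φ be a positive trace-preserving linear map on n×n complex matrices, and let P be an orthogonal projection on ℂⁿ. Then Φ(P·M·P) ⊆ P·M·P (i.e. Φ maps matrices supported in the range of P to matrices supported in the range of P) if and only if P ≤ Φ*(P), where Φ* is the adjoint of Φ with respect to the trace inner product. -/
/-!
Write `Q = 1 - P`. Trace duality makes `Ψ` unital and positive. For positive `σ = σP`,
`tr (Q Φ(σ) Q) = tr (σ Ψ(Q)) = -tr (σ (Ψ(P) - P))`, and a positive semidefinite `A` with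
`QAQ = 0` satisfies `A = PAP`. So `P ≤ Ψ(P)` forces both sides to vanish, i.e.
`Φ(σ) = PΦ(σ)P`, and this extends to all of `P M P` because positive matrices span `M`.
Conversely, invariance gives `PΨ(Q)P = 0`, hence `Ψ(Q) = QΨ(Q)Q` and `Ψ(P) - P = QΨ(P)Q ≥ 0`.
-/

open Matrix
open scoped ComplexOrder

namespace Matrix

section RCLike

variable {𝕜 m : Type*} [RCLike 𝕜] [Fintype m]

theorem PosSemidef.mul_eq_zero_of_mul_mul_eq_zero {A Q : Matrix m m 𝕜} (hA : A.PosSemidef)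
    (hQ : Q.IsHermitian) (h : Q * A * Q = 0) : A * Q = 0 := by
  refine ext_iff_mulVec.mpr fun x => ?_
  rw [← mulVec_mulVec, zero_mulVec, ← hA.dotProduct_mulVec_zero_iff, star_mulVec,
    ← dotProduct_mulVec, mulVec_mulVec, mulVec_mulVec, hQ.eq, h, zero_mulVec, dotProduct_zero]

variable [DecidableEq m]

theorem PosSemidef.eq_one_sub_mul_mul_one_sub {A Q : Matrix m m 𝕜} (hA : A.PosSemidef)
    (hQ : Q.IsHermitian) (h : Q * A * Q = 0) : A = (1 - Q) * A * (1 - Q) := by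
  have hAQ : A * Q = 0 := hA.mul_eq_zero_of_mul_mul_eq_zero hQ h
  have hQA : Q * A = 0 := by
    rw [← hQ.eq, ← hA.isHermitian.eq, ← conjTranspose_mul, hAQ, conjTranspose_zero]
  simp only [sub_mul, mul_sub, one_mul, mul_one, hAQ, hQA, sub_zero]

theorem PosSemidef.trace_mul_nonneg {A B : Matrix m m 𝕜} (hA : A.PosSemidef)
    (hB : B.PosSemidef) : 0 ≤ (A * B).trace := by
  open scoped MatrixOrder in
  obtain ⟨C, rfl⟩ := CStarAlgebra.nonneg_iff_eq_star_mul_self.mp hB.nonneg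
  rw [← mul_assoc, trace_mul_cycle]
  exact (hA.mul_mul_conjTranspose_same C).trace_nonneg

omit [DecidableEq m] in
theorem posSemidef_of_isStarProjection {P : Matrix m m 𝕜} (hP : IsStarProjection P) :
    P.PosSemidef :=
  open scoped MatrixOrder in hP.nonneg.posSemidef

end RCLike

variable {m : Type*} [Fintype m]

theorem trace_vecMulVec_mul {R : Type*} [CommSemiring R] (v w : m → R) (X : Matrix m m R) :
    (vecMulVec v w * X).trace = w ⬝ᵥ X *ᵥ v := by
  rw [vecMulVec_mul, trace_vecMulVec, dotProduct_comm, dotProduct_mulVec]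

variable [DecidableEq m]

-- Over `ℂ`, unlike over `ℝ`, a nonnegative quadratic form forces the matrix to be Hermitian.
theorem posSemidef_of_forall_dotProduct_mulVec_nonneg {X : Matrix m m ℂ}
    (h : ∀ v, 0 ≤ star v ⬝ᵥ X *ᵥ v) : X.PosSemidef := by
  rw [← isPositive_toEuclideanLin_iff, LinearMap.isPositive_iff_complex]
  intro x
  rw [EuclideanSpace.inner_eq_star_dotProduct, ofLp_toLpLin, toLin'_apply, ← star_star x.ofLp,
    star_dotProduct_star, star_star, dotProduct_comm]
  obtain ⟨hre, him⟩ := RCLike.nonneg_iff.mp (h x.ofLp)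
  exact ⟨Complex.ext (by simp) (by simpa using him), by simpa using hre⟩

theorem posSemidef_of_forall_trace_mul_nonneg {X : Matrix m m ℂ}
    (h : ∀ ρ : Matrix m m ℂ, ρ.PosSemidef → 0 ≤ (ρ * X).trace) : X.PosSemidef :=
  posSemidef_of_forall_dotProduct_mulVec_nonneg fun v =>
    trace_vecMulVec_mul v (star v) X ▸ h _ (posSemidef_vecMulVec_self_star v)

open scoped MatrixOrder in
theorem span_posSemidef : Submodule.span ℂ {A : Matrix m m ℂ | A.PosSemidef} = ⊤ := by
  simpa only [nonneg_iff_posSemidef] using CStarAlgebra.span_nonneg (A := Matrix m m ℂ)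

theorem linearMap_ext_posSemidef {M : Type*} [AddCommGroup M] [Module ℂ M]
    {f g : Matrix m m ℂ →ₗ[ℂ] M} (h : ∀ A : Matrix m m ℂ, A.PosSemidef → f A = g A) :
    f = g :=
  LinearMap.ext_on span_posSemidef h

end Matrix

section TraceDual

variable {m : Type*} [Fintype m] [DecidableEq m] {Φ Ψ : Matrix m m ℂ →ₗ[ℂ] Matrix m m ℂ}

theorem map_one_of_trace_dual (htr : ∀ ρ, (Φ ρ).trace = ρ.trace)
    (hadj : ∀ ρ X : Matrix m m ℂ, (Φ ρ * X).trace = (ρ * Ψ X).trace) : Ψ 1 = 1 :=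
  ext_iff_trace_mul_left.mpr fun ρ => by rw [← hadj, mul_one, mul_one, htr]

theorem posSemidef_map_of_trace_dual (hpos : ∀ ρ, ρ.PosSemidef → (Φ ρ).PosSemidef)
    (hadj : ∀ ρ X : Matrix m m ℂ, (Φ ρ * X).trace = (ρ * Ψ X).trace)
    {X : Matrix m m ℂ} (hX : X.PosSemidef) : (Ψ X).PosSemidef :=
  posSemidef_of_forall_trace_mul_nonneg fun ρ hρ =>
    hadj ρ X ▸ (hpos ρ hρ).trace_mul_nonneg hX

variable (hpos : ∀ ρ, ρ.PosSemidef → (Φ ρ).PosSemidef)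
  (htr : ∀ ρ, (Φ ρ).trace = ρ.trace)
  (hadj : ∀ ρ X : Matrix m m ℂ, (Φ ρ * X).trace = (ρ * Ψ X).trace)
  {P : Matrix m m ℂ} (hP : IsStarProjection P)
include hpos htr hadj hP

theorem posSemidef_adjoint_sub_of_map_compression
    (h : ∀ ρ : Matrix m m ℂ, Φ (P * ρ * P) = P * Φ (P * ρ * P) * P) :
    (Ψ P - P).PosSemidef := by
  obtain ⟨Q, hQP⟩ : ∃ Q, 1 - P = Q := ⟨_, rfl⟩
  have hQ : IsStarProjection Q := hQP ▸ hP.one_sub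
  have hPQ : P * Q = 0 := hQP ▸ hP.mul_one_sub_self
  have hcompress : P * Ψ Q * P = 0 := by
    refine ext_iff_trace_mul_left.mpr fun ρ => ?_
    rw [mul_zero, trace_zero]
    calc (ρ * (P * Ψ Q * P)).trace = (P * ρ * P * Ψ Q).trace := by
          simp only [← mul_assoc]; rw [trace_mul_comm]; simp only [← mul_assoc]
      _ = (Φ (P * ρ * P) * Q).trace := (hadj _ _).symm
      _ = 0 := by
          conv_lhs => rw [h ρ]
          rw [mul_assoc _ P, hPQ, mul_zero, trace_zero]
  have hΨQ : Ψ Q = Q * Ψ Q * Q := by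
    simpa only [← hQP, sub_sub_cancel] using
      (posSemidef_map_of_trace_dual hpos hadj (posSemidef_of_isStarProjection hQ)
        ).eq_one_sub_mul_mul_one_sub hP.isSelfAdjoint.isHermitian hcompress
  have hdiff : Ψ P - P = Q * Ψ P * Q := by
    have hΨP : Ψ P = 1 - Ψ Q := by
      rw [← hQP, map_sub, map_one_of_trace_dual htr hadj, sub_sub_cancel]
    rw [hΨP, mul_sub, sub_mul, mul_one, hQ.isIdempotentElem.eq, ← hΨQ, ← hQP]
    abel
  rw [hdiff]
  simpa only [hQ.isSelfAdjoint.isHermitian.eq] using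
    (posSemidef_map_of_trace_dual hpos hadj (posSemidef_of_isStarProjection hP)
      ).conjTranspose_mul_mul_same Q

theorem map_eq_mul_mul_of_posSemidef_adjoint_sub (h : (Ψ P - P).PosSemidef)
    {σ : Matrix m m ℂ} (hσ : σ.PosSemidef) (hσP : σ * P = σ) : Φ σ = P * Φ σ * P := by
  obtain ⟨Q, hQP⟩ : ∃ Q, 1 - P = Q := ⟨_, rfl⟩
  have hQ : IsStarProjection Q := hQP ▸ hP.one_sub
  have hQΦQ : (Q * Φ σ * Q).PosSemidef := by
    simpa only [hQ.isSelfAdjoint.isHermitian.eq] using (hpos σ hσ).conjTranspose_mul_mul_same Q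
  have htrace : (Q * Φ σ * Q).trace = -(σ * (Ψ P - P)).trace := by
    calc (Q * Φ σ * Q).trace = (Φ σ * Q).trace := by
          rw [trace_mul_cycle, hQ.isIdempotentElem.eq, trace_mul_comm]
      _ = (σ * Ψ Q).trace := hadj _ _
      _ = -(σ * (Ψ P - P)).trace := by
          rw [← hQP, map_sub, map_one_of_trace_dual htr hadj, mul_sub, mul_sub, mul_one, hσP,
            trace_sub, trace_sub, neg_sub]
  have hzero : Q * Φ σ * Q = 0 := hQΦQ.trace_eq_zero_iff.mp <|
    le_antisymm (htrace ▸ neg_nonpos.mpr (hσ.trace_mul_nonneg h)) hQΦQ.trace_nonneg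
  simpa only [← hQP, sub_sub_cancel] using
    (hpos σ hσ).eq_one_sub_mul_mul_one_sub hQ.isSelfAdjoint.isHermitian hzero

theorem map_compression_eq_of_posSemidef_adjoint_sub (h : (Ψ P - P).PosSemidef)
    (ρ : Matrix m m ℂ) : Φ (P * ρ * P) = P * Φ (P * ρ * P) * P := by
  let compress := LinearMap.mulLeftRight ℂ (P, P)
  have : Φ ∘ₗ compress = compress ∘ₗ Φ ∘ₗ compress :=
    linearMap_ext_posSemidef fun σ hσ => by
      show Φ (P * σ * P) = P * Φ (P * σ * P) * P
      have hPσP : (P * σ * P).PosSemidef := by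
        simpa only [hP.isSelfAdjoint.isHermitian.eq] using hσ.conjTranspose_mul_mul_same P
      exact map_eq_mul_mul_of_posSemidef_adjoint_sub hpos htr hadj hP h hPσP
        (by rw [mul_assoc, hP.isIdempotentElem.eq])
  exact LinearMap.congr_fun this ρ

end TraceDual

/-- For a positive trace-preserving map `Φ` on n×n matrices and an orthogonal
projection `P`, `Φ` maps matrices supported in the range of `P` to matrices
supported in the range of `P` iff `P ≤ Φ*(P)`. -/
theorem stmt1 {n : ℕ}
    (Φ Ψ : Matrix (Fin n) (Fin n) ℂ →ₗ[ℂ] Matrix (Fin n) (Fin n) ℂ)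
    (hpos : ∀ ρ, ρ.PosSemidef → (Φ ρ).PosSemidef)
    (htr : ∀ ρ, (Φ ρ).trace = ρ.trace)
    (hadj : ∀ ρ X : Matrix (Fin n) (Fin n) ℂ, (Φ ρ * X).trace = (ρ * Ψ X).trace)
    (P : Matrix (Fin n) (Fin n) ℂ) (hP : P.IsHermitian) (hP2 : P * P = P) :
    (∀ ρ : Matrix (Fin n) (Fin n) ℂ,
        Φ (P * ρ * P) = P * Φ (P * ρ * P) * P) ↔ (Ψ P - P).PosSemidef := by
  have hproj : IsStarProjection P := ⟨hP2, hP⟩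
  exact ⟨posSemidef_adjoint_sub_of_map_compression hpos htr hadj hproj,
    map_compression_eq_of_posSemidef_adjoint_sub hpos htr hadj hproj⟩
end

section
/- Let Φ(ρ) = ∑_κ A_κ ρ A_κ* be a completely positive map on n×n complex matrices with Kraus operators (A_κ). Then Φ is irreducible (no nontrivial reducing projection) if and only if for every nonzero φ ∈ ℂⁿ, the set ℂ[A]·φ of all vectors p(A_{κ₁},…,A_{κ_m})φ, where p ranges over all (noncommutative) products A_{κ₁}⋯A_{κ_m} with m ≥ 0, spans ℂⁿ. -/
open Matrix
open scoped ComplexOrder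

/-!
For a Hermitian projection `P`, `Φ` leaves `P Mₙ P` invariant iff `P A_κ P = A_κ P` for every `κ`,
i.e. iff the range of `P` is invariant under every Kraus operator: testing at `ρ = 1`, the corner
`(1 - P) Φ(P) (1 - P) = ∑ B_κ B_κᴴ` with `B_κ = (1 - P) A_κ P` must vanish, which forces every
`B_κ = 0`. Since every subspace is the range of an orthogonal projection, irreducibility says that
the `A_κ` have no common invariant subspace other than `0` and `ℂⁿ`. The span of the vectors
`A_{κ₁} ⋯ A_{κ_m} φ` is the smallest common invariant subspace containing `φ`, so this happens
iff it is all of `ℂⁿ` for every `φ ≠ 0`.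
-/

namespace Module.End

variable {R M K : Type*} [Semiring R] [AddCommMonoid M] [Module R M]

def cyclicSubmodule (f : K → Module.End R M) (x : M) : Submodule R M :=
  Submodule.span R {y | ∃ l : List K, y = (l.map f).prod x}

theorem mem_cyclicSubmodule_self (f : K → Module.End R M) (x : M) : x ∈ cyclicSubmodule f x :=
  Submodule.subset_span ⟨[], rfl⟩

theorem cyclicSubmodule_mem_invtSubmodule (f : K → Module.End R M) (x : M) (κ : K) :
    cyclicSubmodule f x ∈ (f κ).invtSubmodule := by
  rw [mem_invtSubmodule, cyclicSubmodule, Submodule.span_le]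
  rintro _ ⟨l, rfl⟩
  exact Submodule.subset_span ⟨κ :: l, rfl⟩

theorem cyclicSubmodule_le {f : K → Module.End R M} {x : M} {V : Submodule R M}
    (hV : ∀ κ, V ∈ (f κ).invtSubmodule) (hx : x ∈ V) : cyclicSubmodule f x ≤ V := by
  rw [cyclicSubmodule, Submodule.span_le]
  rintro _ ⟨l, rfl⟩
  induction l with
  | nil => exact hx
  | cons κ l ih => exact hV κ ih

theorem forall_cyclicSubmodule_eq_top_iff (f : K → Module.End R M) :
    (∀ x ≠ 0, cyclicSubmodule f x = ⊤) ↔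
      ∀ V : Submodule R M, (∀ κ, V ∈ (f κ).invtSubmodule) → V = ⊥ ∨ V = ⊤ := by
  constructor
  · intro h V hV
    refine or_iff_not_imp_left.2 fun hV0 => ?_
    obtain ⟨x, hxV, hx0⟩ := Submodule.exists_mem_ne_zero_of_ne_bot hV0
    exact top_le_iff.1 (h x hx0 ▸ cyclicSubmodule_le hV hxV)
  · intro h x hx
    refine (h _ (cyclicSubmodule_mem_invtSubmodule f x)).resolve_left fun h0 => hx ?_
    simpa [h0] using mem_cyclicSubmodule_self f x

end Module.End

namespace Matrix

section StarOrdered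

variable {m n ι R : Type*} [Fintype m] [Fintype n] [CommRing R] [PartialOrder R] [StarRing R]
  [StarOrderedRing R] [NoZeroDivisors R]

theorem sum_mul_conjTranspose_self_eq_zero_iff (s : Finset ι) (B : ι → Matrix m n R) :
    ∑ i ∈ s, B i * (B i)ᴴ = 0 ↔ ∀ i ∈ s, B i = 0 := by
  refine ⟨fun h => ?_, fun h => Finset.sum_eq_zero fun i hi => by simp [h i hi]⟩
  have htrace : ∑ i ∈ s, (B i * (B i)ᴴ).trace = 0 := by rw [← trace_sum, h, trace_zero]
  rw [Finset.sum_eq_zero_iff_of_nonneg fun i _ =>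
    (posSemidef_self_mul_conjTranspose (B i)).trace_nonneg] at htrace
  exact fun i hi => trace_mul_conjTranspose_self_eq_zero_iff.1 (htrace i hi)

theorem kraus_compression_invariant_iff [DecidableEq m] {K : Type*} [Fintype K]
    (A : K → Matrix m m R) {P : Matrix m m R} (hP : P.IsHermitian) (hPP : P * P = P) :
    (∀ ρ, ∑ κ, A κ * (P * ρ * P) * (A κ)ᴴ = P * (∑ κ, A κ * (P * ρ * P) * (A κ)ᴴ) * P) ↔
      ∀ κ, P * A κ * P = A κ * P := by
  constructor
  · intro h κ
    have hQP : (1 - P) * P = 0 := by rw [sub_mul, one_mul, hPP, sub_self]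
    have hsum : ∑ κ, ((1 - P) * A κ * P) * ((1 - P) * A κ * P)ᴴ = 0 :=
      calc ∑ κ, ((1 - P) * A κ * P) * ((1 - P) * A κ * P)ᴴ
          = (1 - P) * (∑ κ, A κ * (P * 1 * P) * (A κ)ᴴ) * (1 - P) := by
            simp only [Finset.mul_sum, Finset.sum_mul, conjTranspose_mul, hP.eq,
              conjTranspose_sub, conjTranspose_one, Matrix.mul_one, Matrix.mul_assoc]
        _ = 0 := by
            rw [h 1]
            simp only [← Matrix.mul_assoc, hQP, Matrix.zero_mul]
    have hB := (sum_mul_conjTranspose_self_eq_zero_iff _ _).1 hsum κ (Finset.mem_univ κ)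
    rw [sub_mul, sub_mul, one_mul, sub_eq_zero] at hB
    exact hB.symm
  · intro h ρ
    have h' : ∀ κ, P * (A κ)ᴴ * P = P * (A κ)ᴴ := fun κ => by
      simpa [Matrix.mul_assoc, hP.eq] using congrArg conjTranspose (h κ)
    rw [Finset.mul_sum, Finset.sum_mul]
    refine Finset.sum_congr rfl fun κ _ => ?_
    calc A κ * (P * ρ * P) * (A κ)ᴴ = (A κ * P) * ρ * (P * (A κ)ᴴ) := by
          simp only [Matrix.mul_assoc]
      _ = _ := by rw [← h κ, ← h' κ]; simp only [Matrix.mul_assoc]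

end StarOrdered

section CommRing

variable {m K R : Type*} [Fintype m] [DecidableEq m] [CommRing R]

theorem list_prod_mulVec (l : List K) (A : K → Matrix m m R) (v : m → R) :
    (l.map A).prod *ᵥ v = (l.map fun κ => toLin' (A κ)).prod v := by
  have h := map_list_prod (toLinAlgEquiv' (R := R) (n := m)) (l.map A)
  simp only [List.map_map] at h
  exact congrArg (· v) h

theorem range_toLin'_mem_invtSubmodule_iff {P : Matrix m m R} (hPP : P * P = P)
    (A : Matrix m m R) :
    LinearMap.range (toLin' P) ∈ Module.End.invtSubmodule (toLin' A) ↔ P * A * P = A * P := by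
  have hidem : IsIdempotentElem (toLin' P) :=
    (show IsIdempotentElem P from hPP).map toLinAlgEquiv'
  rw [LinearMap.IsIdempotentElem.range_mem_invtSubmodule_iff hidem, ← toLin'_mul, ← toLin'_mul,
    toLin'.injective.eq_iff, Matrix.mul_assoc]

theorem range_toLin'_eq_top_iff {P : Matrix m m R} (hPP : P * P = P) :
    LinearMap.range (toLin' P) = ⊤ ↔ P = 1 := by
  have hidem : IsIdempotentElem (toLin' P) :=
    (show IsIdempotentElem P from hPP).map toLinAlgEquiv'
  refine ⟨fun h => toLin'.injective (LinearMap.ext fun x => ?_), fun h => by simp [h]⟩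
  rw [toLin'_one, LinearMap.id_apply, ← LinearMap.IsIdempotentElem.mem_range_iff hidem, h]
  exact Submodule.mem_top

end CommRing

section RCLike

variable {m K 𝕜 : Type*} [Fintype m] [DecidableEq m] [RCLike 𝕜]

theorem exists_isHermitian_idempotent_range_toLin'_eq (V : Submodule 𝕜 (m → 𝕜)) :
    ∃ P : Matrix m m 𝕜, P.IsHermitian ∧ P * P = P ∧ LinearMap.range (toLin' P) = V := by
  let V' : Submodule 𝕜 (EuclideanSpace 𝕜 m) :=
    V.comap (WithLp.linearEquiv 2 𝕜 (m → 𝕜)).toLinearMap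
  have hP := (isStarProjection_starProjection (U := V')).map
    (toEuclideanCLM (n := m) (𝕜 := 𝕜)).symm
  set P := (toEuclideanCLM (n := m) (𝕜 := 𝕜)).symm V'.starProjection
  have hmem : ∀ x, x ∈ LinearMap.range (toLin' P) ↔ x ∈ V := fun x => by
    have hidem : IsIdempotentElem (toLin' P) := hP.isIdempotentElem.map toLinAlgEquiv'
    have hPx : WithLp.toLp 2 (P *ᵥ x) = V'.starProjection (WithLp.toLp 2 x) := by
      rw [← toEuclideanCLM_toLp, StarAlgEquiv.apply_symm_apply]
    rw [LinearMap.IsIdempotentElem.mem_range_iff hidem, toLin'_apply,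
      ← (WithLp.toLp_injective 2).eq_iff, hPx, Submodule.starProjection_eq_self_iff]
    rfl
  exact ⟨P, hP.isSelfAdjoint.isHermitian, hP.isIdempotentElem, Submodule.ext hmem⟩

theorem forall_isHermitian_idempotent_eq_zero_or_one_iff (A : K → Matrix m m 𝕜) :
    (∀ P : Matrix m m 𝕜, P.IsHermitian → P * P = P →
        (∀ κ, P * A κ * P = A κ * P) → P = 0 ∨ P = 1) ↔
      ∀ V : Submodule 𝕜 (m → 𝕜),
        (∀ κ, V ∈ Module.End.invtSubmodule (toLin' (A κ))) → V = ⊥ ∨ V = ⊤ := by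
  constructor
  · intro h V hV
    obtain ⟨P, hP, hPP, rfl⟩ := exists_isHermitian_idempotent_range_toLin'_eq V
    refine (h P hP hPP fun κ => (range_toLin'_mem_invtSubmodule_iff hPP (A κ)).1 (hV κ)).imp
      (fun h0 => ?_) (range_toLin'_eq_top_iff hPP).2
    rw [h0, map_zero, LinearMap.range_zero]
  · intro h P _ hPP hA
    refine (h _ fun κ => (range_toLin'_mem_invtSubmodule_iff hPP (A κ)).2 (hA κ)).imp
      (fun h0 => ?_) (range_toLin'_eq_top_iff hPP).1
    rwa [LinearMap.range_eq_bot, LinearEquiv.map_eq_zero_iff] at h0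

end RCLike

end Matrix

/-- A completely positive map with Kraus operators `(A κ)` is irreducible iff
for every nonzero `φ`, the set of vectors `A_{κ₁} ⋯ A_{κ_m} φ` (products of
Kraus operators, `m ≥ 0`) spans `ℂⁿ`. -/
theorem stmt5 {n : ℕ} {K : Type*} [Fintype K]
    (A : K → Matrix (Fin n) (Fin n) ℂ)
    (Φ : Matrix (Fin n) (Fin n) ℂ →ₗ[ℂ] Matrix (Fin n) (Fin n) ℂ)
    (hΦ : ∀ ρ, Φ ρ = ∑ κ, A κ * ρ * (A κ)ᴴ) :
    (∀ P : Matrix (Fin n) (Fin n) ℂ, P.IsHermitian → P * P = P →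
        (∀ ρ, Φ (P * ρ * P) = P * Φ (P * ρ * P) * P) → P = 0 ∨ P = 1) ↔
    (∀ φ : Fin n → ℂ, φ ≠ 0 →
        Submodule.span ℂ
          {v : Fin n → ℂ | ∃ l : List K, v = ((l.map A).prod).mulVec φ} = ⊤) := by
  have hcyclic : ∀ φ : Fin n → ℂ, Submodule.span ℂ
      {v : Fin n → ℂ | ∃ l : List K, v = ((l.map A).prod).mulVec φ} =
        Module.End.cyclicSubmodule (fun κ => toLin' (A κ)) φ := fun φ => by
    simp only [Module.End.cyclicSubmodule, list_prod_mulVec]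
  have hreduce : ∀ P : Matrix (Fin n) (Fin n) ℂ, P.IsHermitian → P * P = P →
      ((∀ ρ, Φ (P * ρ * P) = P * Φ (P * ρ * P) * P) ↔ ∀ κ, P * A κ * P = A κ * P) :=
    fun P hP hPP => by simpa only [hΦ] using kraus_compression_invariant_iff A hP hPP
  simp only [hcyclic, Module.End.forall_cyclicSubmodule_eq_top_iff,
    ← forall_isHermitian_idempotent_eq_zero_or_one_iff]
  exact forall_congr' fun P => forall_congr' fun hP => forall_congr' fun hPP => by
    rw [hreduce P hP hPP]
end

section
/- An irreducible positive trace-preserving map Φ on n×n complex matrices has at most one invariant state, and if an invariant state exists then it is faithful (positive definite). In finite dimension, an invariant state always exists, hence Φ has exactly one invariant state, which is positive definite. -/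
/-!
Let `A` be a Hermitian fixed point of `Φ` and `P` the spectral projection of `A` onto its
positive eigenvalues. Since `Φ A⁺ - A = Φ A⁻ ≥ 0`, compressing by `P` gives
`P (Φ A⁺) P ≥ P A P = A⁺`, and `tr Φ A⁺ = tr A⁺`; so the part of `Φ A⁺` outside the corner
`P Mₙ P` has trace zero and vanishes. Every positive element of the corner is dominated by a
multiple of `A⁺`, so positivity of `Φ` carries this over to the whole corner: `Φ` maps
`P Mₙ P` into itself. Irreducibility leaves `P = 0` or `P = 1`, i.e. a nonzero Hermitian fixed
point is positive or negative definite.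

Fixed points exist because `Φ - id` has only traceless values and so is not surjective, and
positive maps commute with `ᴴ`, so there is a nonzero Hermitian one. Normalising its definite
sign gives a faithful invariant state; the difference of two invariant states is a traceless
Hermitian fixed point, hence zero.
-/

open Matrix
open scoped ComplexOrder MatrixOrder

namespace Matrix

variable {ι : Type*} [Fintype ι]

lemma trace_le_trace {X Y : Matrix ι ι ℂ} (h : X ≤ Y) : X.trace ≤ Y.trace :=
  (tracePositiveLinearMap ι ℂ ℂ).monotone h

variable [DecidableEq ι]

lemma trace_conj_add_trace_conj_one_sub {P : Matrix ι ι ℂ} (hP : IsIdempotentElem P)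
    (Y : Matrix ι ι ℂ) : (P * Y * P).trace + ((1 - P) * Y * (1 - P)).trace = Y.trace := by
  have hconj {Q : Matrix ι ι ℂ} (hQ : IsIdempotentElem Q) : (Q * Y * Q).trace = (Q * Y).trace := by
    rw [trace_mul_cycle, hQ.eq]
  rw [hconj hP, hconj hP.one_sub, ← trace_add, ← add_mul, add_sub_cancel, one_mul]

lemma conj_eq_self_of_conj_one_sub_eq_zero {P Y : Matrix ι ι ℂ} (hP : IsStarProjection P)
    (hY : 0 ≤ Y) (h : (1 - P) * Y * (1 - P) = 0) : P * Y * P = Y := by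
  obtain ⟨B, rfl⟩ := CStarAlgebra.nonneg_iff_eq_star_mul_self.mp hY
  have hQ := hP.one_sub.isSelfAdjoint
  have hBQ : B * (1 - P) = 0 := (conjTranspose_mul_self_eq_zero (A := B * (1 - P))).mp <| by
    rw [← star_eq_conjTranspose, star_mul, hQ.star_eq, ← h]
    simp only [mul_assoc]
  have hBP : B * P = B := by rwa [mul_sub, mul_one, sub_eq_zero, eq_comm] at hBQ
  calc P * (star B * B) * P = star (B * P) * (B * P) := by
        rw [star_mul, hP.isSelfAdjoint.star_eq]; simp only [mul_assoc]
    _ = star B * B := by rw [hBP]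

@[elab_as_elim]
lemma nonneg_induction {p : Matrix ι ι ℂ → Prop} (X : Matrix ι ι ℂ)
    (nonneg : ∀ Y, 0 ≤ Y → p Y) (zero : p 0) (add : ∀ Y Z, p Y → p Z → p (Y + Z))
    (smul : ∀ (c : ℂ) Y, p Y → p (c • Y)) : p X :=
  Submodule.span_induction (s := {Y | 0 ≤ Y}) (p := fun Y _ => p Y) nonneg zero
    (fun Y Z _ _ => add Y Z) (fun c Y _ => smul c Y)
    (by rw [CStarAlgebra.span_nonneg]; exact Submodule.mem_top)

lemma continuousOn_spectrum (A : Matrix ι ι ℂ) (f : ℝ → ℝ) : ContinuousOn f (spectrum ℝ A) :=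
  A.finite_real_spectrum.continuousOn f

lemma posPart_eq_cfc (A : Matrix ι ι ℂ) : A⁺ = cfc (fun x : ℝ => x⁺) A := by
  rw [CFC.posPart_def, cfcₙ_eq_cfc]

-- The spectrum is finite, so the step function is continuous on it and `cfc` does not return
-- its junk value `0`.
noncomputable def posSpectralProj (A : Matrix ι ι ℂ) : Matrix ι ι ℂ :=
  cfc (fun x : ℝ => if 0 < x then (1 : ℝ) else 0) A

lemma isStarProjection_posSpectralProj (A : Matrix ι ι ℂ) :
    IsStarProjection (posSpectralProj A) where
  isIdempotentElem := by
    rw [IsIdempotentElem, posSpectralProj, ← cfc_mul _ _ _ (continuousOn_spectrum A _)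
      (continuousOn_spectrum A _)]
    congr! 2 with x
    split_ifs <;> simp
  isSelfAdjoint := cfc_predicate _ _

lemma posSpectralProj_mul_mul_self {A : Matrix ι ι ℂ} (hA : IsSelfAdjoint A) :
    posSpectralProj A * A * posSpectralProj A = A⁺ := by
  rw [posPart_eq_cfc, posSpectralProj]
  nth_rewrite 2 [← cfc_id' ℝ A]
  rw [← cfc_mul _ _ _ (continuousOn_spectrum A _) (continuousOn_spectrum A _),
    ← cfc_mul _ _ _ (continuousOn_spectrum A _) (continuousOn_spectrum A _)]
  refine cfc_congr fun x _ => ?_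
  split_ifs with h
  · simp [h.le]
  · simp [not_lt.mp h]

lemma posSpectralProj_mul_posPart {A : Matrix ι ι ℂ} (hA : IsSelfAdjoint A) :
    posSpectralProj A * A⁺ = A⁺ := by
  have hP := (isStarProjection_posSpectralProj A).isIdempotentElem
  rw [← posSpectralProj_mul_mul_self hA, ← mul_assoc, ← mul_assoc, hP.eq]

lemma exists_posSpectralProj_le_smul_posPart (A : Matrix ι ι ℂ) :
    ∃ c : ℝ, posSpectralProj A ≤ c • A⁺ := by
  obtain ⟨c, hc⟩ := (A.finite_real_spectrum.image (·⁻¹)).bddAbove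
  refine ⟨c, ?_⟩
  rw [posSpectralProj, posPart_eq_cfc, ← cfc_const_mul _ _ _ (continuousOn_spectrum A _)]
  refine cfc_mono (fun x hx => ?_) (continuousOn_spectrum A _) (continuousOn_spectrum A _)
  split_ifs with h
  · rw [posPart_eq_self.mpr h.le]
    exact (inv_le_iff_one_le_mul₀ h).mp (hc ⟨x, hx, rfl⟩)
  · simp [posPart_eq_zero.mpr (not_lt.mp h)]

lemma exists_nonneg_le_algebraMap {X : Matrix ι ι ℂ} (hX : IsSelfAdjoint X) :
    ∃ t : ℝ, 0 ≤ t ∧ X ≤ algebraMap ℝ _ t := by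
  obtain ⟨t, ht⟩ := (X.finite_real_spectrum.insert 0).bddAbove
  exact ⟨t, ht (Set.mem_insert 0 _),
    le_algebraMap_of_spectrum_le fun x hx => ht (Set.mem_insert_of_mem 0 hx)⟩

lemma exists_conj_posSpectralProj_le_smul_posPart (A : Matrix ι ι ℂ) {X : Matrix ι ι ℂ}
    (hX : IsSelfAdjoint X) : ∃ s : ℝ, posSpectralProj A * X * posSpectralProj A ≤ s • A⁺ := by
  set P := posSpectralProj A
  have hP := isStarProjection_posSpectralProj A
  obtain ⟨t, ht, hXt⟩ := exists_nonneg_le_algebraMap hX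
  obtain ⟨c, hc⟩ := exists_posSpectralProj_le_smul_posPart A
  refine ⟨t * c, ?_⟩
  calc P * X * P ≤ P * algebraMap ℝ _ t * P := hP.isSelfAdjoint.conjugate_le_conjugate hXt
    _ = t • P := by rw [Algebra.algebraMap_eq_smul_one, mul_smul_comm, mul_one, smul_mul_assoc,
          hP.isIdempotentElem.eq]
    _ ≤ t • c • A⁺ := smul_le_smul_of_nonneg_left hc ht
    _ = (t * c) • A⁺ := smul_smul t c _

lemma posDef_of_posSpectralProj_eq_one {A : Matrix ι ι ℂ} (hA : IsSelfAdjoint A)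
    (h : posSpectralProj A = 1) : A.PosDef := by
  refine IsStrictlyPositive.posDef <|
    (StarOrderedRing.isStrictlyPositive_iff_spectrum_pos (R := ℝ) A).mpr fun x hx => ?_
  by_contra hx0
  have : (if 0 < x then (1 : ℝ) else 0) ∈ spectrum ℝ (posSpectralProj A) := by
    rw [posSpectralProj, cfc_map_spectrum _ _ hA (continuousOn_spectrum A _)]
    exact ⟨x, hx, rfl⟩
  rw [if_neg hx0, h] at this
  exact (spectrum.zero_notMem_iff ℝ).mpr isUnit_one this

end Matrix

namespace LinearMap

variable {ι : Type*} {Φ : Matrix ι ι ℂ →ₗ[ℂ] Matrix ι ι ℂ}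

lemma monotone_of_map_posSemidef (hpos : ∀ ρ, ρ.PosSemidef → (Φ ρ).PosSemidef) :
    Monotone Φ := fun X Y h => by
  rw [le_iff, ← map_sub]
  exact hpos _ h

variable [Fintype ι] [DecidableEq ι]

def MapsCorner (Φ : Matrix ι ι ℂ →ₗ[ℂ] Matrix ι ι ℂ) (P : Matrix ι ι ℂ) : Prop :=
  ∀ ρ, Φ (P * ρ * P) = P * Φ (P * ρ * P) * P

def IsIrreducible (Φ : Matrix ι ι ℂ →ₗ[ℂ] Matrix ι ι ℂ) : Prop :=
  ∀ P : Matrix ι ι ℂ, P.IsHermitian → P * P = P → Φ.MapsCorner P → P = 0 ∨ P = 1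

lemma map_star_of_map_posSemidef (hpos : ∀ ρ, ρ.PosSemidef → (Φ ρ).PosSemidef)
    (X : Matrix ι ι ℂ) : Φ (star X) = star (Φ X) := by
  induction X using nonneg_induction with
  | nonneg Y hY =>
    rw [hY.isSelfAdjoint.star_eq, (hpos Y hY.posSemidef).nonneg.isSelfAdjoint.star_eq]
  | zero => simp
  | add Y Z hY hZ => rw [star_add, map_add, map_add, star_add, hY, hZ]
  | smul c Y hY => rw [star_smul, map_smul, map_smul, star_smul, hY]

lemma mapsCorner_posSpectralProj (hpos : ∀ ρ, ρ.PosSemidef → (Φ ρ).PosSemidef)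
    {A : Matrix ι ι ℂ} (h : posSpectralProj A * Φ A⁺ * posSpectralProj A = Φ A⁺) :
    Φ.MapsCorner (posSpectralProj A) := by
  set P := posSpectralProj A
  have hP : IsStarProjection P := isStarProjection_posSpectralProj A
  intro X
  induction X using nonneg_induction with
  | nonneg X hX =>
    obtain ⟨s, hs⟩ := exists_conj_posSpectralProj_le_smul_posPart A hX.isSelfAdjoint
    have hY : 0 ≤ Φ (P * X * P) := by
      simpa using monotone_of_map_posSemidef hpos (hP.isSelfAdjoint.conjugate_nonneg hX)
    have hQ : (1 - P) * Φ A⁺ * (1 - P) = 0 := by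
      rw [← h]; simp only [← mul_assoc, hP.one_sub_mul_self, zero_mul]
    refine (conj_eq_self_of_conj_one_sub_eq_zero hP hY (le_antisymm ?_
      (hP.one_sub.isSelfAdjoint.conjugate_nonneg hY))).symm
    calc (1 - P) * Φ (P * X * P) * (1 - P) ≤ (1 - P) * (s • Φ A⁺) * (1 - P) :=
          hP.one_sub.isSelfAdjoint.conjugate_le_conjugate <| by
            rw [← map_smul_of_tower]; exact monotone_of_map_posSemidef hpos hs
      _ = 0 := by rw [mul_smul_comm, smul_mul_assoc, hQ, smul_zero]
  | zero => simp
  | add X Y hX hY =>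
    simp only [mul_add, add_mul, map_add]
    rw [← hX, ← hY]
  | smul c X hX =>
    simp only [mul_smul_comm, smul_mul_assoc, map_smul]
    rw [← hX]

lemma conj_posSpectralProj_map_posPart (hpos : ∀ ρ, ρ.PosSemidef → (Φ ρ).PosSemidef)
    (htr : ∀ ρ, (Φ ρ).trace = ρ.trace) {A : Matrix ι ι ℂ} (hA : IsSelfAdjoint A)
    (hfix : Φ A = A) : posSpectralProj A * Φ A⁺ * posSpectralProj A = Φ A⁺ := by
  set P := posSpectralProj A
  set Y := Φ A⁺
  have hP : IsStarProjection P := isStarProjection_posSpectralProj A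
  have hY : 0 ≤ Y := by simpa using monotone_of_map_posSemidef hpos (CFC.posPart_nonneg A)
  have hAY : A ≤ Y := by
    rw [le_iff, ← hfix, ← map_sub]
    nth_rewrite 2 [← CFC.posPart_sub_negPart A]
    rw [sub_sub_cancel]
    exact hpos _ (CFC.negPart_nonneg A).posSemidef
  have htrace : ((1 - P) * Y * (1 - P)).trace ≤ 0 := by
    have := trace_le_trace (hP.isSelfAdjoint.conjugate_le_conjugate hAY)
    rw [posSpectralProj_mul_mul_self hA, ← htr, ← trace_conj_add_trace_conj_one_sub
      hP.isIdempotentElem Y] at this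
    simpa using this
  refine conj_eq_self_of_conj_one_sub_eq_zero hP hY ?_
  have hQY := (hP.one_sub.isSelfAdjoint.conjugate_nonneg hY).posSemidef
  exact hQY.trace_eq_zero_iff.mp (le_antisymm htrace hQY.trace_nonneg)

lemma posDef_of_posPart_ne_zero (hpos : ∀ ρ, ρ.PosSemidef → (Φ ρ).PosSemidef)
    (htr : ∀ ρ, (Φ ρ).trace = ρ.trace) (hirr : Φ.IsIrreducible) {A : Matrix ι ι ℂ}
    (hA : IsSelfAdjoint A) (hfix : Φ A = A) (h : A⁺ ≠ 0) : A.PosDef := by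
  have hP := isStarProjection_posSpectralProj A
  rcases hirr _ hP.isSelfAdjoint hP.isIdempotentElem
    (mapsCorner_posSpectralProj hpos (conj_posSpectralProj_map_posPart hpos htr hA hfix))
    with h0 | h1
  · exact absurd (by rw [← posSpectralProj_mul_posPart hA, h0, zero_mul]) h
  · exact posDef_of_posSpectralProj_eq_one hA h1

lemma posDef_or_neg_posDef_of_map_eq_self (hpos : ∀ ρ, ρ.PosSemidef → (Φ ρ).PosSemidef)
    (htr : ∀ ρ, (Φ ρ).trace = ρ.trace) (hirr : Φ.IsIrreducible) {A : Matrix ι ι ℂ}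
    (hA : IsSelfAdjoint A) (hfix : Φ A = A) (hne : A ≠ 0) : A.PosDef ∨ (-A).PosDef := by
  by_cases h : A⁺ = 0
  · refine .inr (posDef_of_posPart_ne_zero hpos htr hirr hA.neg (by rw [map_neg, hfix]) ?_)
    rw [CFC.posPart_neg]
    intro hneg
    exact hne (by rw [← CFC.posPart_sub_negPart A, h, hneg, sub_zero])
  · exact .inl (posDef_of_posPart_ne_zero hpos htr hirr hA hfix h)

lemma eq_zero_of_map_eq_self_of_trace_eq_zero [Nonempty ι]
    (hpos : ∀ ρ, ρ.PosSemidef → (Φ ρ).PosSemidef) (htr : ∀ ρ, (Φ ρ).trace = ρ.trace)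
    (hirr : Φ.IsIrreducible) {A : Matrix ι ι ℂ} (hA : IsSelfAdjoint A) (hfix : Φ A = A)
    (htrA : A.trace = 0) : A = 0 := by
  by_contra hne
  rcases posDef_or_neg_posDef_of_map_eq_self hpos htr hirr hA hfix hne with h | h
  · exact h.trace_pos.ne' htrA
  · exact h.trace_pos.ne' (by rw [trace_neg, htrA, neg_zero])

lemma exists_ne_zero_map_eq_self [Nonempty ι] (htr : ∀ ρ, (Φ ρ).trace = ρ.trace) :
    ∃ X ≠ 0, Φ X = X := by
  have hsurj : ¬ Function.Surjective (Φ - LinearMap.id : Matrix ι ι ℂ →ₗ[ℂ] _) := fun hs => by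
    obtain ⟨Y, hY⟩ := hs 1
    have h := congrArg Matrix.trace hY
    simp only [sub_apply, id_apply, Matrix.trace_sub, htr, sub_self, Matrix.trace_one] at h
    exact Fintype.card_ne_zero (α := ι) (by exact_mod_cast h.symm)
  obtain ⟨X, hX, hX0⟩ := (Submodule.ne_bot_iff _).mp
    (LinearMap.ker_eq_bot.not.mpr (mt LinearMap.injective_iff_surjective.mp hsurj))
  exact ⟨X, hX0, sub_eq_zero.mp hX⟩

lemma exists_isSelfAdjoint_ne_zero_map_eq_self [Nonempty ι]
    (hpos : ∀ ρ, ρ.PosSemidef → (Φ ρ).PosSemidef) (htr : ∀ ρ, (Φ ρ).trace = ρ.trace) :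
    ∃ H, IsSelfAdjoint H ∧ H ≠ 0 ∧ Φ H = H := by
  obtain ⟨X, hX0, hX⟩ := exists_ne_zero_map_eq_self htr
  by_cases h : X + star X = 0
  · refine ⟨Complex.I • X, ?_, smul_ne_zero Complex.I_ne_zero hX0, by rw [map_smul, hX]⟩
    rw [IsSelfAdjoint, star_smul, eq_neg_of_add_eq_zero_right h, Complex.star_def,
      Complex.conj_I, neg_smul, smul_neg, neg_neg]
  · exact ⟨X + star X, .add_star_self X, h,
      by rw [map_add, map_star_of_map_posSemidef hpos, hX]⟩

lemma exists_posDef_map_eq_self [Nonempty ι] (hpos : ∀ ρ, ρ.PosSemidef → (Φ ρ).PosSemidef)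
    (htr : ∀ ρ, (Φ ρ).trace = ρ.trace) (hirr : Φ.IsIrreducible) :
    ∃ ρ : Matrix ι ι ℂ, ρ.PosDef ∧ Φ ρ = ρ := by
  obtain ⟨H, hH, hne, hfix⟩ := exists_isSelfAdjoint_ne_zero_map_eq_self hpos htr
  rcases posDef_or_neg_posDef_of_map_eq_self hpos htr hirr hH hfix hne with h | h
  · exact ⟨H, h, hfix⟩
  · exact ⟨-H, h, by rw [map_neg, hfix]⟩

end LinearMap

/-- An irreducible positive trace-preserving map on n×n complex matrices
(n ≥ 1) has exactly one invariant state, and it is faithful (positive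
definite). -/
theorem stmt8 {n : ℕ} (hn : 0 < n)
    (Φ : Matrix (Fin n) (Fin n) ℂ →ₗ[ℂ] Matrix (Fin n) (Fin n) ℂ)
    (hpos : ∀ ρ, ρ.PosSemidef → (Φ ρ).PosSemidef)
    (htr : ∀ ρ, (Φ ρ).trace = ρ.trace)
    (hirr : ∀ P : Matrix (Fin n) (Fin n) ℂ, P.IsHermitian → P * P = P →
        (∀ ρ, Φ (P * ρ * P) = P * Φ (P * ρ * P) * P) → P = 0 ∨ P = 1) :
    ∃ ρ : Matrix (Fin n) (Fin n) ℂ, (ρ.PosDef ∧ ρ.trace = 1 ∧ Φ ρ = ρ) ∧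
      ∀ σ : Matrix (Fin n) (Fin n) ℂ,
        σ.PosSemidef → σ.trace = 1 → Φ σ = σ → σ = ρ := by
  have : Nonempty (Fin n) := Fin.pos_iff_nonempty.mp hn
  obtain ⟨ρ, hρ, hfix⟩ := LinearMap.exists_posDef_map_eq_self hpos htr hirr
  have htr_pos : 0 < ρ.trace := hρ.trace_pos
  set ρ₁ := ρ.trace⁻¹ • ρ
  have hρ₁ : ρ₁.PosDef := hρ.smul (inv_pos.mpr htr_pos)
  have hρ₁tr : ρ₁.trace = 1 := by rw [trace_smul, smul_eq_mul, inv_mul_cancel₀ htr_pos.ne']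
  have hρ₁fix : Φ ρ₁ = ρ₁ := by rw [map_smul, hfix]
  refine ⟨ρ₁, ⟨hρ₁, hρ₁tr, hρ₁fix⟩, fun σ hσ hσtr hσfix => sub_eq_zero.mp ?_⟩
  exact LinearMap.eq_zero_of_map_eq_self_of_trace_eq_zero hpos htr hirr
    (hσ.isHermitian.sub hρ₁.isHermitian) (by rw [map_sub, hσfix, hρ₁fix])
    (by rw [trace_sub, hσtr, hρ₁tr, sub_self])
end

section
/- Let Φ be a completely positive trace-preserving map on n×n complex matrices such that for all states ρ, σ one has Φ^m(ρ) − Φ^m(σ) → 0 as m → ∞ (the Orey property). Then Φ is aperiodic: there is no resolution of the identity (P₀,…,P_{d−1}) with d ≥ 2 consisting of nonzero mutually orthogonal projections summing to I such that Φ*(P_k) = P_{k−1 mod d} for all k. -/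
/-!
Let `ρ` and `σ` be the normalised projections `P₀ / tr P₀` and `P₁ / tr P₁`. By duality,
`tr ((Φᵐ ρ - Φᵐ σ) P₀) = tr ((ρ - σ) Ψᵐ P₀)`, and `Ψ` permutes the `P_k` cyclically, so along
`m = d j` this equals `tr ((ρ - σ) P₀) = 1`, since `P₁ P₀ = 0`. This contradicts
`Φᵐ ρ - Φᵐ σ → 0`.
-/

open Matrix Filter Topology
open scoped ComplexOrder

theorem Function.iterate_card_mul_apply_of_apply_eq_sub {G M : Type*} [AddGroup G] [Fintype G]
    {f : M → M} {P : G → M} {s : G} (h : ∀ k, f (P k) = P (k - s)) (j : ℕ) (k : G) :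
    f^[Fintype.card G * j] (P k) = P k := by
  have hsemi : Function.Semiconj P (· + -s) f := fun k => by rw [h, sub_eq_add_neg]
  rw [← hsemi.iterate_right, add_right_iterate_apply, mul_nsmul, card_nsmul_eq_zero, smul_zero,
    add_zero]

namespace Matrix

variable {ι R : Type*} [Fintype ι]

theorem trace_pow_apply_mul_eq [CommSemiring R] {Φ Ψ : Module.End R (Matrix ι ι R)}
    (hadj : ∀ ρ X, (Φ ρ * X).trace = (ρ * Ψ X).trace) (m : ℕ) (ρ X : Matrix ι ι R) :
    ((Φ ^ m) ρ * X).trace = (ρ * (Ψ ^ m) X).trace := by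
  induction m generalizing X with
  | zero => rfl
  | succ m ih => rw [pow_succ' Φ, pow_succ Ψ, Module.End.mul_apply, hadj, ih, Module.End.mul_apply]

theorem tendsto_trace_sub_mul_pow_apply [CommRing R] [TopologicalSpace R] [IsTopologicalRing R]
    {Φ Ψ : Module.End R (Matrix ι ι R)} (hadj : ∀ ρ X, (Φ ρ * X).trace = (ρ * Ψ X).trace)
    {ρ σ : Matrix ι ι R} (h : Tendsto (fun m : ℕ => (Φ ^ m) ρ - (Φ ^ m) σ) atTop (𝓝 0))
    (X : Matrix ι ι R) :
    Tendsto (fun m : ℕ => ((ρ - σ) * (Ψ ^ m) X).trace) atTop (𝓝 0) := by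
  have hcont : Continuous fun Y : Matrix ι ι R => (Y * X).trace :=
    (continuous_id.matrix_mul continuous_const).matrix_trace
  simpa [Function.comp_def, sub_mul, trace_pow_apply_mul_eq hadj] using (hcont.tendsto 0).comp h

theorem IsHermitian.posSemidef_of_mul_self_eq [CommRing R] [PartialOrder R] [StarRing R]
    [StarOrderedRing R] {P : Matrix ι ι R} (hP : P.IsHermitian) (hPP : P * P = P) :
    P.PosSemidef := by
  simpa [hP.eq, hPP] using posSemidef_conjTranspose_mul_self P

variable {𝕜 : Type*} [RCLike 𝕜] {A : Matrix ι ι 𝕜}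

theorem PosSemidef.trace_pos (hA : A.PosSemidef) (hA0 : A ≠ 0) : 0 < A.trace :=
  hA.trace_nonneg.lt_of_ne (Ne.symm (hA.trace_eq_zero_iff.not.mpr hA0))

theorem PosSemidef.inv_trace_smul (hA : A.PosSemidef) (hA0 : A ≠ 0) :
    ((A.trace)⁻¹ • A).PosSemidef :=
  hA.smul (RCLike.inv_pos.mpr (hA.trace_pos hA0)).le

theorem PosSemidef.trace_inv_trace_smul (hA : A.PosSemidef) (hA0 : A ≠ 0) :
    ((A.trace)⁻¹ • A).trace = 1 := by
  rw [trace_smul, smul_eq_mul, inv_mul_cancel₀ (hA.trace_pos hA0).ne']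

end Matrix

theorem stmt9 {n : ℕ}
    (Φ Ψ : Matrix (Fin n) (Fin n) ℂ →ₗ[ℂ] Matrix (Fin n) (Fin n) ℂ)
    (hadj : ∀ ρ X : Matrix (Fin n) (Fin n) ℂ, (Φ ρ * X).trace = (ρ * Ψ X).trace)
    (horey : ∀ ρ σ : Matrix (Fin n) (Fin n) ℂ,
      ρ.PosSemidef → ρ.trace = 1 → σ.PosSemidef → σ.trace = 1 →
      Filter.Tendsto (fun m : ℕ => (Φ ^ m) ρ - (Φ ^ m) σ) Filter.atTop (nhds 0)) :
    ¬ ∃ (d : ℕ) (hd : 2 ≤ d) (P : Fin d → Matrix (Fin n) (Fin n) ℂ),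
        (∀ k, P k ≠ 0 ∧ (P k).IsHermitian ∧ P k * P k = P k) ∧
        (∀ k l, k ≠ l → P k * P l = 0) ∧
        (∑ k, P k = 1) ∧
        (∀ k : Fin d, Ψ (P k) = P (k - ⟨1, by omega⟩)) := by
  rintro ⟨d, hd, P, hproj, horth, -, hcyc⟩
  have : NeZero d := ⟨by omega⟩
  have hpsd (k : Fin d) : (P k).PosSemidef :=
    (hproj k).2.1.posSemidef_of_mul_self_eq (hproj k).2.2
  have hstate (k : Fin d) : (((P k).trace)⁻¹ • P k).PosSemidef ∧
      (((P k).trace)⁻¹ • P k).trace = 1 :=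
    ⟨(hpsd k).inv_trace_smul (hproj k).1, (hpsd k).trace_inv_trace_smul (hproj k).1⟩
  set ρ := ((P 0).trace)⁻¹ • P 0
  set σ := ((P 1).trace)⁻¹ • P 1
  have hperiod (j : ℕ) : (Ψ ^ (d * j)) (P 0) = P 0 := by
    simpa [Module.End.pow_apply] using
      Function.iterate_card_mul_apply_of_apply_eq_sub hcyc j 0
  have hgap : ((ρ - σ) * P 0).trace = 1 := by
    have h10 : P 1 * P 0 = 0 := horth 1 0 (by simp [Fin.ext_iff, Nat.mod_eq_of_lt hd])
    rw [sub_mul, trace_sub, smul_mul, smul_mul, (hproj 0).2.2, h10, smul_zero, trace_zero,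
      sub_zero, (hstate 0).2]
  have hlim := (tendsto_trace_sub_mul_pow_apply hadj
    (horey ρ σ (hstate 0).1 (hstate 0).2 (hstate 1).1 (hstate 1).2) (P 0)).comp
    (tendsto_id.const_mul_atTop' (by omega : 0 < d))
  simp only [Function.comp_def, id, hperiod, hgap, tendsto_const_nhds_iff] at hlim
  exact one_ne_zero hlim
end

section
/- Let 𝔐 be an open quantum random walk on ⊕_{i∈V} 𝔥_i. A closed subspace 𝒱 ⊆ ⊕_i 𝔥_i is an enclosure for 𝔐 (i.e. supp ρ ⊆ 𝒱 implies supp 𝔐(ρ) ⊆ 𝒱 for all positive trace-class ρ) if and only if 𝒱 is stable under every operator L_π ⊗ |j⟩⟨i| for all i, j ∈ V and all paths π from i to j, where L_π is the composition of transition operators along π. -/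
open Matrix
open scoped ComplexOrder

/-- The `(i,j)` block of an operator on `⊕_i 𝔥_i`. -/
def oqrwBlock {V : Type*} {m : V → ℕ}
    (ρ : Matrix (Σ i : V, Fin (m i)) (Σ i : V, Fin (m i)) ℂ) (i j : V) :
    Matrix (Fin (m i)) (Fin (m j)) ℂ :=
  fun a b => ρ ⟨i, a⟩ ⟨j, b⟩

/-- The open quantum random walk with transition operators `L i j`. -/
noncomputable def oqrwMap {V : Type*} [Fintype V] [DecidableEq V] {m : V → ℕ}
    (L : ∀ i j : V, Matrix (Fin (m i)) (Fin (m j)) ℂ)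
    (ρ : Matrix (Σ i : V, Fin (m i)) (Σ i : V, Fin (m i)) ℂ) :
    Matrix (Σ i : V, Fin (m i)) (Σ i : V, Fin (m i)) ℂ :=
  Matrix.blockDiagonal' (fun i => ∑ j, L i j * oqrwBlock ρ j j * (L i j)ᴴ)

/-- The component of `x ∈ ⊕_i 𝔥_i` at site `i`. -/
def siteProj {V : Type*} {m : V → ℕ} (i : V)
    (x : (Σ i : V, Fin (m i)) → ℂ) : Fin (m i) → ℂ :=
  fun a => x ⟨i, a⟩

/-- The embedding of `𝔥_j` into `⊕_i 𝔥_i`. -/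
def siteEmb {V : Type*} [DecidableEq V] {m : V → ℕ} (j : V)
    (y : Fin (m j) → ℂ) : (Σ i : V, Fin (m i)) → ℂ :=
  fun s => if h : s.1 = j then y (h ▸ s.2) else 0

/-- The operator `L_π` along the path `c 0, c 1, …, c ℓ`. -/
noncomputable def pathOp {V : Type*} {m : V → ℕ}
    (L : ∀ i j : V, Matrix (Fin (m i)) (Fin (m j)) ℂ) (c : ℕ → V) :
    (ℓ : ℕ) → Matrix (Fin (m (c ℓ))) (Fin (m (c 0))) ℂ
  | 0 => 1
  | ℓ + 1 => L (c (ℓ + 1)) (c ℓ) * pathOp L c ℓ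

/-!
Since `𝔐` acts blockwise, `𝒱` is an enclosure as soon as it is stable under the one-step
operators `L_{i,j} ⊗ |i⟩⟨j|`, and stability along paths follows by composing steps.
Conversely, feeding the pure state `ρ = |x⟩⟨x|` with `x ∈ 𝒱` to `𝔐` gives a matrix whose
`i`-th block is `∑_k y_k y_k*` with `y_k = L_{i,k} x_k`; its range is spanned by the `y_k`,
so each `L_{i,j} x_j ⊗ |i⟩` lies in `supp 𝔐(ρ) ⊆ 𝒱`.
-/

section RangeOfGram

variable {n p R : Type*} [Fintype n] [Fintype p] [DecidableEq n] [DecidableEq p]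
  [Field R] [PartialOrder R] [StarRing R] [StarOrderedRing R]

lemma Matrix.range_toLin'_mul_conjTranspose (A : Matrix n p R) :
    LinearMap.range (toLin' (A * Aᴴ)) = LinearMap.range (toLin' A) := by
  apply Submodule.eq_of_le_of_finrank_eq
  · rintro _ ⟨v, rfl⟩
    exact ⟨Aᴴ *ᵥ v, by simp [mulVec_mulVec]⟩
  · exact rank_self_mul_conjTranspose A

lemma Matrix.mem_range_toLin'_sum_vecMulVec_star (y : p → n → R) (k : p) :
    y k ∈ LinearMap.range (toLin' (∑ l, vecMulVec (y l) (star (y l)))) := by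
  let B : Matrix n p R := of fun a l => y l a
  have hgram : ∑ l, vecMulVec (y l) (star (y l)) = B * Bᴴ := by
    ext a b
    simp [B, Matrix.sum_apply, mul_apply, vecMulVec_apply]
  rw [hgram, range_toLin'_mul_conjTranspose]
  exact ⟨Pi.single k 1, by ext a; simp [B]⟩

end RangeOfGram

lemma Matrix.mul_vecMulVec_star_mul_conjTranspose {n p R : Type*} [Fintype p] [CommSemiring R]
    [StarRing R] (A : Matrix n p R) (u : p → R) :
    A * vecMulVec u (star u) * Aᴴ = vecMulVec (A *ᵥ u) (star (A *ᵥ u)) := by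
  rw [mul_vecMulVec, vecMulVec_mul, star_mulVec]

lemma Matrix.range_toLin'_vecMulVec_star_le {n R : Type*} [Fintype n] [DecidableEq n]
    [CommSemiring R] [StarRing R] {𝒱 : Submodule R (n → R)} {x : n → R} (hx : x ∈ 𝒱) :
    LinearMap.range (toLin' (vecMulVec x (star x))) ≤ 𝒱 := by
  rintro _ ⟨v, rfl⟩
  rw [toLin'_apply, vecMulVec_mulVec, op_smul_eq_smul]
  exact 𝒱.smul_mem _ hx

section Sites

variable {V : Type*} [DecidableEq V] {m : V → ℕ}

@[simp]
lemma siteProj_siteEmb_self (j : V) (y : Fin (m j) → ℂ) : siteProj j (siteEmb j y) = y := by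
  funext a
  simp [siteProj, siteEmb]

def siteEmbₗ (j : V) : (Fin (m j) → ℂ) →ₗ[ℂ] ((Σ i : V, Fin (m i)) → ℂ) where
  toFun := siteEmb j
  map_add' y z := by
    funext s
    by_cases h : s.1 = j <;> simp [siteEmb, h]
  map_smul' c y := by
    funext s
    by_cases h : s.1 = j <;> simp [siteEmb, h]

lemma siteEmb_sum {ι : Type*} (s : Finset ι) (j : V) (f : ι → Fin (m j) → ℂ) :
    siteEmb j (∑ k ∈ s, f k) = ∑ k ∈ s, siteEmb j (f k) :=
  map_sum (siteEmbₗ j) f s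

variable [Fintype V]

lemma sum_siteEmb_siteProj (x : (Σ i : V, Fin (m i)) → ℂ) :
    ∑ i, siteEmb i (siteProj i x) = x := by
  funext ⟨i, a⟩
  rw [Finset.sum_apply, Finset.sum_eq_single i]
  · simp [siteEmb, siteProj]
  · intro k _ hk
    simp [siteEmb, Ne.symm hk]
  · simp

lemma siteProj_mulVec_siteEmb (ρ : Matrix (Σ i : V, Fin (m i)) (Σ i : V, Fin (m i)) ℂ)
    (i j : V) (y : Fin (m j) → ℂ) :
    siteProj i (ρ *ᵥ siteEmb j y) = oqrwBlock ρ i j *ᵥ y := by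
  funext a
  simp only [siteProj, mulVec, dotProduct, ← Finset.univ_sigma_univ, Finset.sum_sigma]
  rw [Finset.sum_eq_single j]
  · simp [oqrwBlock, siteEmb]
  · intro k _ hk
    simp [siteEmb, hk]
  · simp

lemma blockDiagonal'_mulVec_siteEmb (M : ∀ i, Matrix (Fin (m i)) (Fin (m i)) ℂ)
    (i : V) (y : Fin (m i) → ℂ) :
    blockDiagonal' M *ᵥ siteEmb i y = siteEmb i (M i *ᵥ y) := by
  rw [← sum_siteEmb_siteProj (blockDiagonal' M *ᵥ siteEmb i y)]
  refine (Finset.sum_eq_single i (fun k _ hk => ?_) (by simp)).trans ?_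
  · rw [siteProj_mulVec_siteEmb, show oqrwBlock (blockDiagonal' M) k i = 0 from
      funext₂ fun a b => blockDiagonal'_apply_ne M a b hk, zero_mulVec]
    exact map_zero (siteEmbₗ k)
  · rw [siteProj_mulVec_siteEmb]
    congr 2
    funext a b
    exact blockDiagonal'_apply_eq M i a b

lemma siteEmb_mem_range_toLin'_blockDiagonal' {M : ∀ i, Matrix (Fin (m i)) (Fin (m i)) ℂ}
    {i : V} {y : Fin (m i) → ℂ} (hy : y ∈ LinearMap.range (toLin' (M i))) :
    siteEmb i y ∈ LinearMap.range (toLin' (blockDiagonal' M)) := by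
  obtain ⟨v, rfl⟩ := hy
  exact ⟨siteEmb i v, by simp [blockDiagonal'_mulVec_siteEmb]⟩

lemma range_toLin'_blockDiagonal'_le {M : ∀ i, Matrix (Fin (m i)) (Fin (m i)) ℂ}
    {𝒱 : Submodule ℂ ((Σ i : V, Fin (m i)) → ℂ)}
    (h : ∀ i y, siteEmb i (M i *ᵥ y) ∈ 𝒱) :
    LinearMap.range (toLin' (blockDiagonal' M)) ≤ 𝒱 := by
  rintro _ ⟨v, rfl⟩
  rw [toLin'_apply, ← sum_siteEmb_siteProj v, mulVec_sum]
  exact Submodule.sum_mem _ fun i _ => blockDiagonal'_mulVec_siteEmb M i _ ▸ h i _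

end Sites

section Enclosure

variable {V : Type*} [Fintype V] [DecidableEq V] {m : V → ℕ}

def IsEnclosure (L : ∀ i j : V, Matrix (Fin (m i)) (Fin (m j)) ℂ)
    (𝒱 : Submodule ℂ ((Σ i : V, Fin (m i)) → ℂ)) : Prop :=
  ∀ ρ : Matrix (Σ i : V, Fin (m i)) (Σ i : V, Fin (m i)) ℂ, ρ.PosSemidef →
    LinearMap.range (toLin' ρ) ≤ 𝒱 → LinearMap.range (toLin' (oqrwMap L ρ)) ≤ 𝒱

variable {L : ∀ i j : V, Matrix (Fin (m i)) (Fin (m j)) ℂ}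
  {𝒱 : Submodule ℂ ((Σ i : V, Fin (m i)) → ℂ)}

lemma IsEnclosure.siteEmb_mulVec_siteProj_mem (h : IsEnclosure L 𝒱) (i j : V)
    {x : (Σ i : V, Fin (m i)) → ℂ} (hx : x ∈ 𝒱) :
    siteEmb i (L i j *ᵥ siteProj j x) ∈ 𝒱 := by
  let ρ := vecMulVec x (star x)
  have hblock : ∑ k, L i k * oqrwBlock ρ k k * (L i k)ᴴ =
      ∑ k, vecMulVec (L i k *ᵥ siteProj k x) (star (L i k *ᵥ siteProj k x)) :=
    Finset.sum_congr rfl fun k _ => mul_vecMulVec_star_mul_conjTranspose (L i k) _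
  refine h ρ (posSemidef_vecMulVec_self_star x) (range_toLin'_vecMulVec_star_le hx)
    (siteEmb_mem_range_toLin'_blockDiagonal' ?_)
  rw [hblock]
  exact mem_range_toLin'_sum_vecMulVec_star (fun k => L i k *ᵥ siteProj k x) j

lemma isEnclosure_of_siteEmb_mulVec_siteProj_mem
    (h : ∀ i j, ∀ x ∈ 𝒱, siteEmb i (L i j *ᵥ siteProj j x) ∈ 𝒱) : IsEnclosure L 𝒱 := by
  intro ρ _ hρ
  refine range_toLin'_blockDiagonal'_le fun i y => ?_
  rw [sum_mulVec, siteEmb_sum]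
  refine Submodule.sum_mem _ fun j _ => ?_
  rw [← mulVec_mulVec, ← mulVec_mulVec, ← siteProj_mulVec_siteEmb]
  exact h i j _ (hρ ⟨_, rfl⟩)

end Enclosure

section Paths

variable {V : Type*} [DecidableEq V] {m : V → ℕ}
  {L : ∀ i j : V, Matrix (Fin (m i)) (Fin (m j)) ℂ} {𝒱 : Submodule ℂ ((Σ i : V, Fin (m i)) → ℂ)}

lemma siteEmb_pathOp_mulVec_siteProj_mem
    (h : ∀ i j, ∀ x ∈ 𝒱, siteEmb i (L i j *ᵥ siteProj j x) ∈ 𝒱)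
    (c : ℕ → V) {ℓ : ℕ} (hℓ : 1 ≤ ℓ) {x : (Σ i : V, Fin (m i)) → ℂ} (hx : x ∈ 𝒱) :
    siteEmb (c ℓ) (pathOp L c ℓ *ᵥ siteProj (c 0) x) ∈ 𝒱 := by
  induction ℓ, hℓ using Nat.le_induction with
  | base => simpa [pathOp] using h (c 1) (c 0) x hx
  | succ ℓ _ ih =>
    simpa [pathOp, ← mulVec_mulVec] using h (c (ℓ + 1)) (c ℓ) _ ih

end Paths

theorem stmt11_general {V : Type*} [Fintype V] [DecidableEq V] {m : V → ℕ}
    (L : ∀ i j : V, Matrix (Fin (m i)) (Fin (m j)) ℂ)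
    (𝒱 : Submodule ℂ ((Σ i : V, Fin (m i)) → ℂ)) :
    (∀ ρ : Matrix (Σ i : V, Fin (m i)) (Σ i : V, Fin (m i)) ℂ, ρ.PosSemidef →
        LinearMap.range (Matrix.toLin' ρ) ≤ 𝒱 →
        LinearMap.range (Matrix.toLin' (oqrwMap L ρ)) ≤ 𝒱) ↔
    (∀ (c : ℕ → V) (ℓ : ℕ), 1 ≤ ℓ → ∀ x ∈ 𝒱,
        siteEmb (c ℓ) ((pathOp L c ℓ).mulVec (siteProj (c 0) x)) ∈ 𝒱) := by
  refine ⟨fun h c ℓ hℓ x hx => ?_, fun h => ?_⟩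
  · exact siteEmb_pathOp_mulVec_siteProj_mem
      (fun i j _ hx => IsEnclosure.siteEmb_mulVec_siteProj_mem h i j hx) c hℓ hx
  · refine isEnclosure_of_siteEmb_mulVec_siteProj_mem fun i j x hx => ?_
    simpa [pathOp] using h (fun n => if n = 0 then j else i) 1 le_rfl x hx

/-- A subspace `𝒱 ⊆ ⊕_i 𝔥_i` is an enclosure for the OQRW iff it is stable
under every operator `L_π ⊗ |j⟩⟨i|` for every path `π` from `i` to `j`. -/
theorem stmt11 {V : Type*} [Fintype V] [DecidableEq V] {m : V → ℕ}
    (L : ∀ i j : V, Matrix (Fin (m i)) (Fin (m j)) ℂ)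
    (hstoch : ∀ j, ∑ i, (L i j)ᴴ * L i j = 1)
    (𝒱 : Submodule ℂ ((Σ i : V, Fin (m i)) → ℂ)) :
    (∀ ρ : Matrix (Σ i : V, Fin (m i)) (Σ i : V, Fin (m i)) ℂ, ρ.PosSemidef →
        LinearMap.range (Matrix.toLin' ρ) ≤ 𝒱 →
        LinearMap.range (Matrix.toLin' (oqrwMap L ρ)) ≤ 𝒱) ↔
    (∀ (c : ℕ → V) (ℓ : ℕ), 1 ≤ ℓ → ∀ x ∈ 𝒱,
        siteEmb (c ℓ) ((pathOp L c ℓ).mulVec (siteProj (c 0) x)) ∈ 𝒱) :=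
  stmt11_general L 𝒱
end

section
/- The support of an invariant state of a positive trace-preserving map Φ on trace-class operators is an enclosure: if Φ(ρ₀) = ρ₀ for a state ρ₀, and ρ is any state with supp ρ ⊆ supp ρ₀, then supp Φ(ρ) ⊆ supp ρ₀. -/
open Matrix
open scoped ComplexOrder MatrixOrder

/-!
If `supp ρ ⊆ supp ρ₀` then `ρ = ρ₀ W` for some matrix `W`, and in the C⋆-algebra of matrices this
forces `ρ ≤ ‖W‖ ρ₀`: indeed `ρ² = ρ₀ (W W⋆) ρ₀ ≤ ‖W‖² ρ₀²`, and the square root is operator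
monotone. Positivity of `Φ` and `Φ ρ₀ = ρ₀` then give `0 ≤ Φ ρ ≤ ‖W‖ ρ₀`, so `ker ρ₀ ⊆ ker Φ ρ`,
and for Hermitian matrices this kernel inclusion is the reverse inclusion of ranges.
-/

theorem CStarAlgebra.le_norm_smul_of_eq_mul {A : Type*} [CStarAlgebra A] [PartialOrder A]
    [StarOrderedRing A] {a b w : A} (ha : 0 ≤ a) (hb : 0 ≤ b) (h : a = b * w) : a ≤ ‖w‖ • b := by
  have hsq : a * a ≤ (‖w‖ • b) * (‖w‖ • b) := calc
    a * a = b * (w * star w) * b := by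
      nth_rw 2 [← ha.star_eq]
      rw [h, star_mul, hb.star_eq]
      noncomm_ring
    _ ≤ b * algebraMap ℝ A (‖w‖ ^ 2) * b :=
      conjugate_le_conjugate_of_nonneg CStarAlgebra.mul_star_le_algebraMap_norm_sq hb
    _ = (‖w‖ • b) * (‖w‖ • b) := by
      rw [Algebra.algebraMap_eq_smul_one, mul_smul_one, smul_mul_smul_comm, smul_mul_assoc, sq]
  calc a = CFC.sqrt (a * a) := (CFC.sqrt_mul_self a ha).symm
    _ ≤ CFC.sqrt ((‖w‖ • b) * (‖w‖ • b)) := CFC.sqrt_le_sqrt _ _ hsq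
    _ = ‖w‖ • b := CFC.sqrt_mul_self _ (smul_nonneg (norm_nonneg w) hb)

namespace Matrix

theorem exists_eq_mul_of_range_toLin'_le {m n R : Type*} [Fintype n] [DecidableEq n] [CommRing R]
    {A B : Matrix m n R} (h : LinearMap.range (toLin' A) ≤ LinearMap.range (toLin' B)) :
    ∃ W : Matrix n n R, A = B * W := by
  choose w hw using fun j => h ⟨Pi.single j 1, rfl⟩
  refine ⟨(of w)ᵀ, ext_of_mulVec_single fun j => ?_⟩
  rw [← mulVec_mulVec]
  simpa [mulVec_single_one] using (hw j).symm

open scoped Matrix.Norms.L2Operator in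
theorem PosSemidef.exists_le_smul_of_range_toLin'_le {n : Type*} [Fintype n] [DecidableEq n]
    {A B : Matrix n n ℂ} (hA : A.PosSemidef) (hB : B.PosSemidef)
    (h : LinearMap.range (toLin' A) ≤ LinearMap.range (toLin' B)) :
    ∃ c : ℝ, A ≤ c • B := by
  obtain ⟨W, hW⟩ := exists_eq_mul_of_range_toLin'_le h
  exact ⟨‖W‖, CStarAlgebra.le_norm_smul_of_eq_mul hA.nonneg hB.nonneg hW⟩

variable {n 𝕜 : Type*} [Fintype n] [DecidableEq n] [RCLike 𝕜] {A B : Matrix n n 𝕜}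

theorem IsHermitian.range_toLin'_le_of_ker_le (hA : A.IsHermitian) (hB : B.IsHermitian)
    (h : LinearMap.ker (toLin' B) ≤ LinearMap.ker (toLin' A)) :
    LinearMap.range (toLin' A) ≤ LinearMap.range (toLin' B) := by
  have hrange := (ContinuousLinearMap.ker_le_ker_iff_range_le_range
    (T := toEuclideanCLM (𝕜 := 𝕜) A) (U := toEuclideanCLM (𝕜 := 𝕜) B)
    (isSymmetric_toEuclideanLin_iff.mpr hA) (isSymmetric_toEuclideanLin_iff.mpr hB)).mp <| by
      intro x hx
      rw [LinearMap.mem_ker, ← WithLp.ofLp_eq_zero] at hx ⊢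
      simpa using @h x.ofLp (by simpa using hx)
  rintro _ ⟨x, rfl⟩
  obtain ⟨y, hy⟩ := hrange ⟨WithLp.toLp 2 x, rfl⟩
  exact ⟨y.ofLp, by simpa using congrArg WithLp.ofLp hy⟩

theorem PosSemidef.ker_toLin'_le_of_le (hA : A.PosSemidef) (hAB : A ≤ B) :
    LinearMap.ker (toLin' B) ≤ LinearMap.ker (toLin' A) := by
  intro x hx
  rw [LinearMap.mem_ker, toLin'_apply] at hx ⊢
  have hle := (le_iff.mp hAB).dotProduct_mulVec_nonneg x
  rw [sub_mulVec, dotProduct_sub, hx, dotProduct_zero, zero_sub, neg_nonneg] at hle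
  exact (hA.dotProduct_mulVec_zero_iff x).mp (le_antisymm hle (hA.dotProduct_mulVec_nonneg x))

theorem PosSemidef.range_toLin'_le_of_le (hA : A.PosSemidef) (hAB : A ≤ B) :
    LinearMap.range (toLin' A) ≤ LinearMap.range (toLin' B) :=
  hA.isHermitian.range_toLin'_le_of_ker_le (hA.nonneg.trans hAB).posSemidef.isHermitian
    (hA.ker_toLin'_le_of_le hAB)

end Matrix

theorem stmt12_general {n : ℕ}
    (Φ : Matrix (Fin n) (Fin n) ℂ →ₗ[ℂ] Matrix (Fin n) (Fin n) ℂ)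
    (hpos : ∀ ρ, ρ.PosSemidef → (Φ ρ).PosSemidef)
    (ρ₀ ρ : Matrix (Fin n) (Fin n) ℂ)
    (h0 : ρ₀.PosSemidef) (hinv : Φ ρ₀ = ρ₀)
    (hρ : ρ.PosSemidef)
    (hsupp : LinearMap.range (Matrix.toLin' ρ) ≤ LinearMap.range (Matrix.toLin' ρ₀)) :
    LinearMap.range (Matrix.toLin' (Φ ρ)) ≤ LinearMap.range (Matrix.toLin' ρ₀) := by
  obtain ⟨c, hc⟩ := hρ.exists_le_smul_of_range_toLin'_le h0 hsupp
  have hΦc : Φ ρ ≤ c • ρ₀ := by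
    rw [le_iff] at hc ⊢
    simpa [LinearMap.map_smul_of_tower, hinv] using hpos _ hc
  calc LinearMap.range (toLin' (Φ ρ)) ≤ LinearMap.range (toLin' (c • ρ₀)) :=
        (hpos ρ hρ).range_toLin'_le_of_le hΦc
    _ ≤ LinearMap.range (toLin' ρ₀) := by
        rw [← Complex.coe_smul, map_smul]
        exact LinearMap.range_smul_le_range _ _

/-- The support of an invariant state of a positive trace-preserving map is an
enclosure: if `Φ ρ₀ = ρ₀` and `supp ρ ⊆ supp ρ₀` for a state `ρ`, then
`supp (Φ ρ) ⊆ supp ρ₀`. -/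
theorem stmt12 {n : ℕ}
    (Φ : Matrix (Fin n) (Fin n) ℂ →ₗ[ℂ] Matrix (Fin n) (Fin n) ℂ)
    (hpos : ∀ ρ, ρ.PosSemidef → (Φ ρ).PosSemidef)
    (htr : ∀ ρ, (Φ ρ).trace = ρ.trace)
    (ρ₀ ρ : Matrix (Fin n) (Fin n) ℂ)
    (h0 : ρ₀.PosSemidef) (h0t : ρ₀.trace = 1) (hinv : Φ ρ₀ = ρ₀)
    (hρ : ρ.PosSemidef) (hρt : ρ.trace = 1)
    (hsupp : LinearMap.range (Matrix.toLin' ρ) ≤ LinearMap.range (Matrix.toLin' ρ₀)) :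
    LinearMap.range (Matrix.toLin' (Φ ρ)) ≤ LinearMap.range (Matrix.toLin' ρ₀) :=
  stmt12_general Φ hpos ρ₀ ρ h0 hinv hρ hsupp
end

section
/- Let Φ be a positive trace-preserving map on n×n complex matrices, and let 𝒱 be an enclosure (subspace such that supp ρ ⊆ 𝒱 implies supp Φ(ρ) ⊆ 𝒱), with orthogonal complement decomposition determined by projections P_𝒱 and P_𝒲 = I − P_𝒱. Then for every positive semidefinite ρ, P_𝒲 Φ(P_𝒱 ρ P_𝒲 + P_𝒲 ρ P_𝒱) P_𝒲 = 0. -/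
open Matrix
open scoped ComplexOrder

/-!
Conjugating `ρ` by the Hermitian matrix `P + s (1 - P)`, `s : ℝ`, and compressing the image under
`Φ` to `𝒲` gives a positive semidefinite matrix. By the enclosure property the `𝒱𝒱`-corner of `ρ`
contributes nothing to it, so it equals `s X + s² B` with `X` the matrix to be shown zero. Testing
against vectors, a quadratic `s z + s² w` that is nonnegative for every real `s` has `z = 0`.
-/

lemma Complex.eq_zero_of_forall_nonneg_smul_add_sq_smul {z w : ℂ}
    (h : ∀ s : ℝ, 0 ≤ s • z + s ^ 2 • w) : z = 0 := by
  have him : z.im = 0 := by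
    have h₁ := (Complex.nonneg_iff.mp (h 1)).2
    have h₂ := (Complex.nonneg_iff.mp (h (-1))).2
    simp only [Complex.add_im, Complex.smul_im, smul_eq_mul] at h₁ h₂
    linarith
  have hre : discrim w.re z.re 0 ≤ 0 := discrim_le_zero fun s ↦ by
    have := (Complex.nonneg_iff.mp (h s)).1
    simp only [Complex.add_re, Complex.smul_re, smul_eq_mul] at this
    linarith
  refine Complex.ext (pow_eq_zero_iff two_ne_zero |>.mp ?_) him
  exact le_antisymm (by simpa [discrim] using hre) (sq_nonneg _)

lemma Matrix.eq_zero_of_forall_dotProduct_mulVec_eq_zero {m : Type*} [Fintype m]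
    {X : Matrix m m ℂ} (h : ∀ v : m → ℂ, star v ⬝ᵥ X *ᵥ v = 0) : X = 0 := by
  classical
  suffices toEuclideanLin X = 0 from toEuclideanLin.injective (by simpa using this)
  refine (inner_map_self_eq_zero _).mp fun x ↦ ?_
  rw [← inner_conj_symm, EuclideanSpace.inner_eq_star_dotProduct, dotProduct_comm]
  simpa using congrArg star (h x)

lemma Matrix.eq_zero_of_forall_posSemidef_smul_add_sq_smul {m : Type*} [Fintype m]
    {X B : Matrix m m ℂ} (h : ∀ s : ℝ, (s • X + s ^ 2 • B).PosSemidef) : X = 0 :=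
  eq_zero_of_forall_dotProduct_mulVec_eq_zero fun v ↦
    Complex.eq_zero_of_forall_nonneg_smul_add_sq_smul fun s ↦ by
      simpa only [add_mulVec, smul_mulVec, dotProduct_add, dotProduct_smul] using
        (h s).dotProduct_mulVec_nonneg v

lemma add_smul_mul_mul_add_smul {R A : Type*} [CommSemiring R] [Semiring A] [Algebra R A]
    (a b c : A) (s : R) :
    (a + s • b) * c * (a + s • b) =
      a * c * a + s • (a * c * b + b * c * a) + s ^ 2 • (b * c * b) := by
  simp only [add_mul, mul_add, smul_mul_assoc, mul_smul_comm, smul_add, smul_smul, sq]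
  abel

section PositiveMap

variable {m : Type*} [Fintype m] {Φ : Matrix m m ℂ →ₗ[ℂ] Matrix m m ℂ} {P ρ : Matrix m m ℂ}

lemma Matrix.PosSemidef.compress_map_conj (hpos : ∀ ρ, ρ.PosSemidef → (Φ ρ).PosSemidef)
    (hρ : ρ.PosSemidef) {A Q : Matrix m m ℂ} (hA : A.IsHermitian) (hQ : Q.IsHermitian) :
    (Q * Φ (A * ρ * A) * Q).PosSemidef := by
  have hAρA : (A * ρ * A).PosSemidef := by
    simpa only [hA.eq] using hρ.mul_mul_conjTranspose_same A
  simpa only [hQ.eq] using (hpos _ hAρA).mul_mul_conjTranspose_same Q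

lemma one_sub_mul_map_mul_mul_one_sub_eq_zero [DecidableEq m] (hP : P.IsHermitian)
    (hP2 : P * P = P) (hencl : ∀ ρ, ρ.PosSemidef → P * ρ * P = ρ → P * Φ ρ * P = Φ ρ)
    (hρ : ρ.PosSemidef) :
    (1 - P) * Φ (P * ρ * P) * (1 - P) = 0 := by
  have hPρP : (P * ρ * P).PosSemidef := by
    simpa only [hP.eq] using hρ.mul_mul_conjTranspose_same P
  have hfix : P * (P * ρ * P) * P = P * ρ * P := by
    simp only [← mul_assoc, hP2]
    rw [mul_assoc, hP2]
  have hQP : (1 - P) * P = 0 := by rw [sub_mul, one_mul, hP2, sub_self]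
  rw [← hencl _ hPρP hfix]
  simp only [← mul_assoc, hQP, zero_mul]

end PositiveMap

theorem stmt13_general {n : ℕ}
    (Φ : Matrix (Fin n) (Fin n) ℂ →ₗ[ℂ] Matrix (Fin n) (Fin n) ℂ)
    (hpos : ∀ ρ, ρ.PosSemidef → (Φ ρ).PosSemidef)
    (P : Matrix (Fin n) (Fin n) ℂ) (hP : P.IsHermitian) (hP2 : P * P = P)
    (hencl : ∀ ρ, ρ.PosSemidef → P * ρ * P = ρ → P * Φ ρ * P = Φ ρ) :
    ∀ ρ : Matrix (Fin n) (Fin n) ℂ, ρ.PosSemidef →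
      (1 - P) * Φ (P * ρ * (1 - P) + (1 - P) * ρ * P) * (1 - P) = 0 := by
  intro ρ hρ
  have hQ : (1 - P).IsHermitian := isHermitian_one.sub hP
  refine eq_zero_of_forall_posSemidef_smul_add_sq_smul
    (B := (1 - P) * Φ ((1 - P) * ρ * (1 - P)) * (1 - P)) fun s ↦ ?_
  have h := hρ.compress_map_conj hpos (hP.add (hQ.smul (IsSelfAdjoint.all s))) hQ
  convert h using 1
  rw [add_smul_mul_mul_add_smul]
  simp only [map_add, LinearMap.map_smul_of_tower, mul_add, add_mul,
    mul_smul_comm, smul_mul_assoc, one_sub_mul_map_mul_mul_one_sub_eq_zero hP hP2 hencl hρ, zero_add]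

/-- If `𝒱` (range of the orthogonal projection `P`) is an enclosure for a
positive trace-preserving map `Φ`, then for every positive semidefinite `ρ`,
the `𝒲𝒲`-corner of `Φ` applied to the off-diagonal part of `ρ` vanishes:
`P_𝒲 Φ(P_𝒱 ρ P_𝒲 + P_𝒲 ρ P_𝒱) P_𝒲 = 0`, where `P_𝒲 = 1 - P`. -/
theorem stmt13 {n : ℕ}
    (Φ : Matrix (Fin n) (Fin n) ℂ →ₗ[ℂ] Matrix (Fin n) (Fin n) ℂ)
    (hpos : ∀ ρ, ρ.PosSemidef → (Φ ρ).PosSemidef)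
    (htr : ∀ ρ, (Φ ρ).trace = ρ.trace)
    (P : Matrix (Fin n) (Fin n) ℂ) (hP : P.IsHermitian) (hP2 : P * P = P)
    (hencl : ∀ ρ, ρ.PosSemidef → P * ρ * P = ρ → P * Φ ρ * P = Φ ρ) :
    ∀ ρ : Matrix (Fin n) (Fin n) ℂ, ρ.PosSemidef →
      (1 - P) * Φ (P * ρ * (1 - P) + (1 - P) * ρ * P) * (1 - P) = 0 :=
  stmt13_general Φ hpos P hP hP2 hencl
end

section
/- Let Φ be a positive trace-preserving map on n×n complex matrices with invariant state η, and let 𝒱 be an enclosure with orthogonal projection P_𝒱 and 𝒲 = 𝒱^⊥ with projection P_𝒲. Then η_𝒲 := P_𝒲 η P_𝒲 satisfies Φ(η_𝒲) = η_𝒲; in particular, the support of η intersected with 𝒱^⊥ is also an enclosure. -/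
/-!
Write `Q = 1 - P`. Invariance of the enclosure gives `Q Φ(PηP) Q = 0`. For every real `r` the
matrix `(P + rQ) η (P + rQ)` is positive, so its image under `Q Φ(·) Q`, which is
`r • Q Φ(PηQ + QηP) Q + r² • Q Φ(QηQ) Q`, is positive for all `r`; this forces the off-diagonal
term to vanish. Compressing `Φ(η) = η` by `Q` then gives `Q Φ(QηQ) Q = QηQ`, and by trace
preservation the positive matrix `Φ(QηQ)` carries all of its trace in the `Q`-block, hence equals
its compression `QηQ`.

For the second claim, let `W ≥ 0` be `Φ`-invariant and `supp ρ ⊆ supp W`. The support projection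
`R` of `W` is dominated by a multiple of `W`, and `ρ = RρR ≤ t • R`, so `ρ ≤ c • W`. Positivity of
`Φ` gives `Φ(ρ) ≤ c • W`, and a positive matrix dominated by a multiple of `W` is supported in
`supp W`.
-/

open Matrix
open scoped ComplexOrder MatrixOrder

lemma eq_zero_of_forall_mul_add_sq_mul_nonneg {a b : ℝ} (h : ∀ r : ℝ, 0 ≤ r * a + r ^ 2 * b) :
    a = 0 := by
  have := discrim_le_zero (a := b) (b := a) (c := 0) fun r => by nlinarith [h r]
  rw [discrim] at this
  nlinarith [sq_nonneg a]

namespace Matrix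

variable {𝕜 ι : Type*} [RCLike 𝕜] [Fintype ι]

theorem eq_zero_of_forall_smul_add_sq_smul_nonneg {A B : Matrix ι ι 𝕜} (hB : B.IsHermitian)
    (h : ∀ r : ℝ, 0 ≤ r • A + r ^ 2 • B) : A = 0 := by
  have hA : A.IsHermitian := by simpa using (le_iff.mp (h 1)).isHermitian.sub hB
  have hquad : ∀ x, star x ⬝ᵥ A *ᵥ x = 0 := fun x => by
    refine RCLike.ext ?_ (by simpa using hA.im_star_dotProduct_mulVec_self x)
    rw [map_zero]
    refine eq_zero_of_forall_mul_add_sq_mul_nonneg (b := RCLike.re (star x ⬝ᵥ B *ᵥ x)) fun r => ?_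
    simpa [add_mulVec, smul_mulVec, RCLike.smul_re] using (le_iff.mp (h r)).re_dotProduct_nonneg x
  refine le_antisymm (le_iff.2 ?_) (nonneg_iff_posSemidef.2 ?_)
  · exact .of_dotProduct_mulVec_nonneg (by simpa using hA.neg) fun x => by simp [neg_mulVec, hquad]
  · exact .of_dotProduct_mulVec_nonneg hA fun x => by simp [hquad]

theorem PosSemidef.mul_eq_zero_of_conj_eq_zero {A P : Matrix ι ι 𝕜} (hA : A.PosSemidef)
    (hP : P.IsHermitian) (h : P * A * P = 0) : A * P = 0 := by
  classical
  obtain ⟨B, rfl⟩ := CStarAlgebra.nonneg_iff_eq_star_mul_self.mp hA.nonneg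
  have hBP : (B * P)ᴴ * (B * P) = 0 := by
    rw [conjTranspose_mul, hP.eq, ← h, star_eq_conjTranspose]
    noncomm_ring
  rw [mul_assoc, conjTranspose_mul_self_eq_zero.mp hBP, mul_zero]

theorem PosSemidef.mulVec_eq_zero_of_le_smul {A W : Matrix ι ι 𝕜} (hA : A.PosSemidef) {c : ℝ}
    (h : A ≤ c • W) {x : ι → 𝕜} (hx : W *ᵥ x = 0) : A *ᵥ x = 0 := by
  refine (hA.dotProduct_mulVec_zero_iff x).1 (le_antisymm ?_ (hA.dotProduct_mulVec_nonneg x))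
  simpa [sub_mulVec, smul_mulVec, hx] using (le_iff.mp h).dotProduct_mulVec_nonneg x

variable [DecidableEq ι]

theorem PosSemidef.conj_eq_self_of_trace_conj_eq {M P : Matrix ι ι 𝕜} (hM : M.PosSemidef)
    (hP : IsStarProjection P) (h : (P * M * P).trace = M.trace) : P * M * P = M := by
  have hQ := hP.one_sub
  have htrace : ((1 - P) * M * (1 - P)).trace = 0 := by
    rw [trace_mul_comm, ← mul_assoc, hQ.isIdempotentElem.eq, sub_mul, one_mul, trace_sub, ← h,
      trace_mul_comm, ← mul_assoc, hP.isIdempotentElem.eq, sub_self]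
  have hQMQ : (1 - P) * M * (1 - P) = 0 :=
    (hQ.isSelfAdjoint.conjugate_nonneg hM.nonneg).posSemidef.trace_eq_zero_iff.1 htrace
  have hMQ := hM.mul_eq_zero_of_conj_eq_zero hQ.isSelfAdjoint hQMQ
  have hQM : (1 - P) * M = 0 := by
    simpa [hQ.isSelfAdjoint.star_eq, hM.isHermitian.isSelfAdjoint.star_eq] using congr(star $hMQ)
  rw [mul_sub, mul_one, sub_eq_zero] at hMQ
  rw [sub_mul, one_mul, sub_eq_zero] at hQM
  rw [mul_assoc, ← hMQ, ← hQM]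

lemma mul_eq_self_of_range_le {R A W : Matrix ι ι 𝕜} (hRW : R * W = W)
    (h : LinearMap.range (toLin' A) ≤ LinearMap.range (toLin' W)) : R * A = A := by
  refine ext_iff_mulVec.2 fun x => ?_
  obtain ⟨y, hy⟩ := h (LinearMap.mem_range_self (toLin' A) x)
  rw [toLin'_apply, toLin'_apply] at hy
  rw [← mulVec_mulVec, ← hy, mulVec_mulVec, hRW]

lemma range_toLin'_mul_le (A B : Matrix ι ι 𝕜) :
    LinearMap.range (toLin' (A * B)) ≤ LinearMap.range (toLin' A) := by
  rw [toLin'_mul]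
  exact LinearMap.range_comp_le_range _ _

lemma continuousOn_real_spectrum (f : ℝ → ℝ) (A : Matrix ι ι 𝕜) :
    ContinuousOn f (spectrum ℝ A) :=
  A.finite_real_spectrum.continuousOn f

/-- Since `0⁻¹ = 0`, `x * x⁻¹` is the indicator of `x ≠ 0`, so this is the orthogonal projection
onto the range of a Hermitian `W`. -/
noncomputable def supportProj (W : Matrix ι ι 𝕜) : Matrix ι ι 𝕜 :=
  cfc (fun x : ℝ => x * x⁻¹) W

section supportProj

variable {W : Matrix ι ι 𝕜}

lemma isStarProjection_supportProj (W : Matrix ι ι 𝕜) : IsStarProjection (supportProj W) := by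
  refine ⟨?_, cfc_predicate _ _⟩
  rw [IsIdempotentElem, supportProj,
    ← cfc_mul _ _ _ (continuousOn_real_spectrum _ W) (continuousOn_real_spectrum _ W)]
  refine cfc_congr fun x _ => ?_
  by_cases hx : x = 0 <;> simp [hx]

lemma supportProj_eq_mul (hW : W.IsHermitian) :
    supportProj W = W * cfc (·⁻¹ : ℝ → ℝ) W := by
  rw [supportProj, cfc_mul _ _ _ (continuousOn_real_spectrum _ W) (continuousOn_real_spectrum _ W),
    cfc_id' ℝ W hW.isSelfAdjoint]

lemma supportProj_mul_self (hW : W.IsHermitian) : supportProj W * W = W := by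
  have h := cfc_mul (fun x : ℝ => x * x⁻¹) (fun x => x) W (continuousOn_real_spectrum _ W)
    (continuousOn_real_spectrum _ W)
  simp only [mul_inv_mul_cancel, cfc_id' ℝ W hW.isSelfAdjoint] at h
  exact h.symm

/-- The constant is `∑ x⁻¹` over the spectrum, which is at least `x⁻¹` for each nonzero
eigenvalue `x`. -/
lemma exists_supportProj_le_smul (hW : W.PosSemidef) : ∃ c : ℝ, supportProj W ≤ c • W := by
  let c := ∑ x ∈ W.finite_real_spectrum.toFinset, x⁻¹
  have hspec : ∀ x ∈ spectrum ℝ W, 0 ≤ x := fun x hx => spectrum_nonneg_of_nonneg hW.nonneg hx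
  refine ⟨c, ?_⟩
  rw [← cfc_const_mul_id c W hW.isHermitian.isSelfAdjoint, supportProj]
  refine cfc_mono (fun x hx => ?_) (continuousOn_real_spectrum _ W) (continuousOn_real_spectrum _ W)
  rcases (hspec x hx).eq_or_lt with rfl | hx0
  · simp
  · calc x * x⁻¹ = x⁻¹ * x := mul_comm _ _
      _ ≤ c * x := by
        gcongr
        exact Finset.single_le_sum (f := (·⁻¹))
          (fun y hy => inv_nonneg.2 (hspec y (by simpa using hy))) (by simpa using hx)

theorem PosSemidef.exists_le_smul_of_range_le {ρ : Matrix ι ι 𝕜} (hρ : ρ.PosSemidef)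
    (hW : W.PosSemidef) (h : LinearMap.range (toLin' ρ) ≤ LinearMap.range (toLin' W)) :
    ∃ c : ℝ, ρ ≤ c • W := by
  have hR := isStarProjection_supportProj W
  set R := supportProj W
  obtain ⟨c, hRc⟩ := exists_supportProj_le_smul hW
  obtain ⟨t, ht⟩ := ρ.finite_real_spectrum.bddAbove
  have hρt : ρ ≤ algebraMap ℝ _ (max t 0) :=
    le_algebraMap_of_spectrum_le (fun x hx => (ht hx).trans (le_max_left t 0))
      hρ.isHermitian.isSelfAdjoint
  have hRρ : R * ρ = ρ := mul_eq_self_of_range_le (supportProj_mul_self hW.isHermitian) h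
  have hρR : ρ * R = ρ := by
    simpa [hR.isSelfAdjoint.star_eq, hρ.isHermitian.isSelfAdjoint.star_eq] using congr(star $hRρ)
  refine ⟨max t 0 * c, ?_⟩
  calc ρ = R * ρ * R := by rw [hRρ, hρR]
    _ ≤ R * algebraMap ℝ _ (max t 0) * R := hR.isSelfAdjoint.conjugate_le_conjugate hρt
    _ = max t 0 • R := by
      rw [Algebra.algebraMap_eq_smul_one, mul_smul_comm, mul_one, smul_mul_assoc,
        hR.isIdempotentElem.eq]
    _ ≤ max t 0 • (c • W) := smul_le_smul_of_nonneg_left hRc (le_max_right t 0)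
    _ = (max t 0 * c) • W := smul_smul _ _ _

theorem PosSemidef.range_le_of_le_smul {A : Matrix ι ι 𝕜} (hA : A.PosSemidef)
    (hW : W.IsHermitian) {c : ℝ} (h : A ≤ c • W) :
    LinearMap.range (toLin' A) ≤ LinearMap.range (toLin' W) := by
  have hR := isStarProjection_supportProj W
  set R := supportProj W with hRdef
  have hWR : W * (1 - R) = 0 := by
    have := congr(star $(supportProj_mul_self hW))
    rw [star_mul, hR.isSelfAdjoint.star_eq, hW.isSelfAdjoint.star_eq] at this
    rw [mul_sub, mul_one, this, sub_self]
  have hAR : A * (1 - R) = 0 := ext_iff_mulVec.2 fun x => by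
    rw [← mulVec_mulVec, zero_mulVec]
    exact hA.mulVec_eq_zero_of_le_smul h (by rw [mulVec_mulVec, hWR, zero_mulVec])
  have hRA : R * A = A := by
    have := congr(star $hAR)
    rw [star_mul, hR.one_sub.isSelfAdjoint.star_eq, hA.isHermitian.isSelfAdjoint.star_eq,
      star_zero, sub_mul, one_mul, sub_eq_zero] at this
    exact this.symm
  rw [← hRA, hRdef, supportProj_eq_mul hW, mul_assoc]
  exact range_toLin'_mul_le _ _

end supportProj

section PositiveMap

variable (Φ : Matrix ι ι 𝕜 →ₗ[𝕜] Matrix ι ι 𝕜)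

theorem range_toLin'_map_le_of_map_eq (hpos : ∀ ρ, ρ.PosSemidef → (Φ ρ).PosSemidef)
    {W ρ : Matrix ι ι 𝕜} (hW : W.PosSemidef) (hΦW : Φ W = W) (hρ : ρ.PosSemidef)
    (h : LinearMap.range (toLin' ρ) ≤ LinearMap.range (toLin' W)) :
    LinearMap.range (toLin' (Φ ρ)) ≤ LinearMap.range (toLin' W) := by
  obtain ⟨c, hc⟩ := hρ.exists_le_smul_of_range_le hW h
  have hΦc : Φ ρ ≤ c • W := by
    simpa [le_iff, map_sub, LinearMap.map_smul_of_tower, hΦW] using hpos _ (le_iff.mp hc)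
  exact (hpos ρ hρ).range_le_of_le_smul hW.isHermitian hΦc

theorem compression_map_offDiag_eq_zero (hpos : ∀ ρ, ρ.PosSemidef → (Φ ρ).PosSemidef)
    {η P Q : Matrix ι ι 𝕜} (hη : η.PosSemidef) (hP : P.IsHermitian) (hQ : Q.IsHermitian)
    (h : Q * Φ (P * η * P) * Q = 0) :
    Q * Φ (P * η * Q + Q * η * P) * Q = 0 := by
  have hconj {A : Matrix ι ι 𝕜} (hA : A.PosSemidef) : 0 ≤ Q * Φ A * Q :=
    hQ.isSelfAdjoint.conjugate_nonneg (hpos A hA).nonneg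
  refine eq_zero_of_forall_smul_add_sq_smul_nonneg
    (hconj (hQ.isSelfAdjoint.conjugate_nonneg hη.nonneg).posSemidef).posSemidef.isHermitian
    fun r => ?_
  have hPrQ : IsSelfAdjoint (P + r • Q) :=
    hP.isSelfAdjoint.add ((IsSelfAdjoint.all r).smul hQ.isSelfAdjoint)
  set C := P * η * Q + Q * η * P with hC
  have hexp : (P + r • Q) * η * (P + r • Q) = P * η * P + r • C + r ^ 2 • (Q * η * Q) := by
    simp only [hC, add_mul, mul_add, smul_mul_assoc, mul_smul_comm, smul_add, smul_smul, sq]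
    abel
  have := hconj (hPrQ.conjugate_nonneg hη.nonneg).posSemidef
  rwa [hexp, map_add, map_add, LinearMap.map_smul_of_tower, LinearMap.map_smul_of_tower, mul_add,
    mul_add, add_mul, add_mul, h, zero_add, mul_smul_comm, mul_smul_comm, smul_mul_assoc,
    smul_mul_assoc] at this

theorem map_compression_one_sub_eq_of_enclosure (hpos : ∀ ρ, ρ.PosSemidef → (Φ ρ).PosSemidef)
    (htr : ∀ ρ, (Φ ρ).trace = ρ.trace) {η P : Matrix ι ι 𝕜} (hη : η.PosSemidef)
    (hΦη : Φ η = η) (hP : IsStarProjection P)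
    (hencl : ∀ ρ, ρ.PosSemidef → P * ρ * P = ρ → P * Φ ρ * P = Φ ρ) :
    Φ ((1 - P) * η * (1 - P)) = (1 - P) * η * (1 - P) := by
  have hQ := hP.one_sub
  set Q := 1 - P with hQdef
  have hPηP : P * (P * η * P) * P = P * η * P := by
    rw [← mul_assoc, ← mul_assoc, hP.isIdempotentElem.eq, mul_assoc, hP.isIdempotentElem.eq]
  have hdiag : Q * Φ (P * η * P) * Q = 0 := by
    rw [← hencl _ (hP.isSelfAdjoint.conjugate_nonneg hη.nonneg).posSemidef hPηP]
    simp only [← mul_assoc, show Q * P = 0 from hP.one_sub_mul_self, zero_mul]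
  set C := P * η * Q + Q * η * P with hC
  have hoff : Q * Φ C * Q = 0 :=
    compression_map_offDiag_eq_zero Φ hpos hη hP.isSelfAdjoint hQ.isSelfAdjoint hdiag
  have hsplit : η = P * η * P + C + Q * η * Q := by
    rw [hC, hQdef]
    noncomm_ring
  have hcompr : Q * Φ (Q * η * Q) * Q = Q * η * Q := by
    conv_rhs => rw [← hΦη, hsplit]
    simp only [map_add, mul_add, add_mul, hdiag, hoff, zero_add]
  have hΦQηQ := hpos _ (hQ.isSelfAdjoint.conjugate_nonneg hη.nonneg).posSemidef
  calc Φ (Q * η * Q) = Q * Φ (Q * η * Q) * Q :=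
        (hΦQηQ.conj_eq_self_of_trace_conj_eq hQ (by rw [hcompr, htr])).symm
    _ = Q * η * Q := hcompr

end PositiveMap

end Matrix

theorem stmt15_general {n : ℕ}
    (Φ : Matrix (Fin n) (Fin n) ℂ →ₗ[ℂ] Matrix (Fin n) (Fin n) ℂ)
    (hpos : ∀ ρ, ρ.PosSemidef → (Φ ρ).PosSemidef)
    (htr : ∀ ρ, (Φ ρ).trace = ρ.trace)
    (η : Matrix (Fin n) (Fin n) ℂ) (hη : η.PosSemidef)
    (hηinv : Φ η = η)
    (P : Matrix (Fin n) (Fin n) ℂ) (hP : P.IsHermitian) (hP2 : P * P = P)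
    (hencl : ∀ ρ, ρ.PosSemidef → P * ρ * P = ρ → P * Φ ρ * P = Φ ρ) :
    Φ ((1 - P) * η * (1 - P)) = (1 - P) * η * (1 - P) ∧
    (∀ ρ : Matrix (Fin n) (Fin n) ℂ, ρ.PosSemidef →
      LinearMap.range (Matrix.toLin' ρ) ≤
        LinearMap.range (Matrix.toLin' ((1 - P) * η * (1 - P))) →
      LinearMap.range (Matrix.toLin' (Φ ρ)) ≤
        LinearMap.range (Matrix.toLin' ((1 - P) * η * (1 - P)))) := by
  have hPproj : IsStarProjection P := ⟨hP2, hP.isSelfAdjoint⟩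
  have hinv := map_compression_one_sub_eq_of_enclosure Φ hpos htr hη hηinv hPproj hencl
  have hW : ((1 - P) * η * (1 - P)).PosSemidef :=
    (hPproj.one_sub.isSelfAdjoint.conjugate_nonneg hη.nonneg).posSemidef
  exact ⟨hinv, fun ρ hρ => range_toLin'_map_le_of_map_eq Φ hpos hW hinv hρ⟩

/-- Let `Φ` be a positive trace-preserving map with invariant state `η`, and
let `𝒱` (range of the orthogonal projection `P`) be an enclosure. Then
`η_𝒲 = (1-P) η (1-P)` is again invariant, and the support of `η_𝒲` (the
support of `η` intersected with `𝒱^⊥`) is also an enclosure. -/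
theorem stmt15 {n : ℕ}
    (Φ : Matrix (Fin n) (Fin n) ℂ →ₗ[ℂ] Matrix (Fin n) (Fin n) ℂ)
    (hpos : ∀ ρ, ρ.PosSemidef → (Φ ρ).PosSemidef)
    (htr : ∀ ρ, (Φ ρ).trace = ρ.trace)
    (η : Matrix (Fin n) (Fin n) ℂ) (hη : η.PosSemidef) (hηt : η.trace = 1)
    (hηinv : Φ η = η)
    (P : Matrix (Fin n) (Fin n) ℂ) (hP : P.IsHermitian) (hP2 : P * P = P)
    (hencl : ∀ ρ, ρ.PosSemidef → P * ρ * P = ρ → P * Φ ρ * P = Φ ρ) :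
    Φ ((1 - P) * η * (1 - P)) = (1 - P) * η * (1 - P) ∧
    (∀ ρ : Matrix (Fin n) (Fin n) ℂ, ρ.PosSemidef →
      LinearMap.range (Matrix.toLin' ρ) ≤
        LinearMap.range (Matrix.toLin' ((1 - P) * η * (1 - P))) →
      LinearMap.range (Matrix.toLin' (Φ ρ)) ≤
        LinearMap.range (Matrix.toLin' ((1 - P) * η * (1 - P)))) :=
  stmt15_general Φ hpos htr η hη hηinv P hP hP2 hencl
end

section
/- Consider the OQRW on V = {1,2,3} with 𝔥_i = ℂ² and transition operators L_{1,2} = L_{2,3} = L_{3,1} = (1/√5)·diag(1,2) and L_{2,1} = L_{3,2} = L_{1,3} = (1/√5)·diag(2,1) (all other L_{i,j} = 0). Then for k = 1, 2, the subspace ℂe_k ⊗ ℓ²(V) (spanned by e_k ⊗ |i⟩ for i ∈ V) is a minimal enclosure, while the smallest enclosure containing (e₁+e₂) ⊗ |1⟩ is the whole space ℂ² ⊗ ℓ²(V). -/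
open Matrix

/-- `(1/√5)·diag(1,2)`. -/
noncomputable def A17 : Matrix (Fin 2) (Fin 2) ℂ :=
  ((Real.sqrt 5 : ℂ))⁻¹ • !![1, 0; 0, 2]

/-- `(1/√5)·diag(2,1)`. -/
noncomputable def B17 : Matrix (Fin 2) (Fin 2) ℂ :=
  ((Real.sqrt 5 : ℂ))⁻¹ • !![2, 0; 0, 1]

/-- The transition operators: `L_{1,2} = L_{2,3} = L_{3,1} = (1/√5)diag(1,2)`,
`L_{2,1} = L_{3,2} = L_{1,3} = (1/√5)diag(2,1)`, all others zero
(sites indexed by `Fin 3`). -/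
noncomputable def L17 : Fin 3 → Fin 3 → Matrix (Fin 2) (Fin 2) ℂ := fun i j =>
  if (i = 0 ∧ j = 1) ∨ (i = 1 ∧ j = 2) ∨ (i = 2 ∧ j = 0) then A17
  else if (i = 1 ∧ j = 0) ∨ (i = 2 ∧ j = 1) ∨ (i = 0 ∧ j = 2) then B17
  else 0

/-- The single-step operator `L_{i,j} ⊗ |i⟩⟨j|` on `ℂ² ⊗ ℓ²(V)`
(full space indexed as site × internal). -/
noncomputable def step17 (i j : Fin 3) (x : Fin 3 × Fin 2 → ℂ) :
    Fin 3 × Fin 2 → ℂ :=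
  fun p => if p.1 = i then ∑ b, L17 i j p.2 b * x (j, b) else 0

/-- `𝒱` is an enclosure iff it is stable under all single-step operators. -/
def IsEnclosure17 (𝒱 : Submodule ℂ (Fin 3 × Fin 2 → ℂ)) : Prop :=
  ∀ i j : Fin 3, ∀ x ∈ 𝒱, step17 i j x ∈ 𝒱

/-- The subspace `ℂ e_k ⊗ ℓ²(V)`, spanned by the vectors `e_k ⊗ |i⟩`. -/
noncomputable def E17 (s : Fin 2) : Submodule ℂ (Fin 3 × Fin 2 → ℂ) :=
  Submodule.span ℂ (Set.range fun i : Fin 3 => (Pi.single (i, s) 1 : Fin 3 × Fin 2 → ℂ))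

/-- The vector `(e₁ + e₂) ⊗ |1⟩`. -/
noncomputable def v17 : Fin 3 × Fin 2 → ℂ :=
  Pi.single ((0 : Fin 3), (0 : Fin 2)) 1 + Pi.single ((0 : Fin 3), (1 : Fin 2)) 1

lemma sqrt5_ne : ((Real.sqrt 5 : ℝ) : ℂ) ≠ 0 :=
  Complex.ofReal_ne_zero.mpr (Real.sqrt_ne_zero'.mpr (by norm_num))

lemma L17_offdiag (i j : Fin 3) (a b : Fin 2) (h : a ≠ b) : L17 i j a b = 0 := by
  unfold L17
  split
  · fin_cases a <;> fin_cases b <;> simp_all [A17]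
  split
  · fin_cases a <;> fin_cases b <;> simp_all [B17]
  · simp

lemma L17_diag_ne (i j : Fin 3) (h : i ≠ j) (s : Fin 2) : L17 i j s s ≠ 0 := by
  fin_cases i <;> fin_cases j <;> fin_cases s <;>
    simp_all [L17, A17, B17, sqrt5_ne]

lemma step17_apply (i j : Fin 3) (x : Fin 3 × Fin 2 → ℂ) :
    step17 i j x = fun p => if p.1 = i then L17 i j p.2 p.2 * x (j, p.2) else 0 := by
  funext p
  obtain ⟨p1, p2⟩ := p
  unfold step17
  by_cases h : p1 = i
  · simp only [h, if_true, Fin.sum_univ_two]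
    fin_cases p2
    · simp [L17_offdiag i j 0 1 (by decide)]
    · simp [L17_offdiag i j 1 0 (by decide)]
  · simp [h]

lemma step17_single (i j : Fin 3) (s : Fin 2) :
    step17 i j (Pi.single (j, s) 1) = L17 i j s s • (Pi.single (i, s) 1 : Fin 3 × Fin 2 → ℂ) := by
  rw [step17_apply]
  funext p
  obtain ⟨p1, p2⟩ := p
  by_cases h2 : p2 = s
  · subst h2
    by_cases h1 : p1 = i <;> simp [h1, Pi.single_apply, Prod.ext_iff]
  · have hL := L17_offdiag i j p2 s h2
    by_cases h1 : p1 = i <;> simp [h1, h2, hL, Pi.single_apply, Prod.ext_iff]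

lemma step17_add (i j : Fin 3) (x y : Fin 3 × Fin 2 → ℂ) :
    step17 i j (x + y) = step17 i j x + step17 i j y := by
  funext p
  unfold step17
  by_cases h : p.1 = i <;> simp [h, Finset.sum_add_distrib, mul_add]

lemma step17_smul (i j : Fin 3) (c : ℂ) (x : Fin 3 × Fin 2 → ℂ) :
    step17 i j (c • x) = c • step17 i j x := by
  funext p
  unfold step17
  by_cases h : p.1 = i <;> simp [h, Finset.mul_sum, mul_left_comm] <;> ring

lemma smul_single_one (p : Fin 3 × Fin 2) (c : ℂ) :
    c • (Pi.single p 1 : Fin 3 × Fin 2 → ℂ) = Pi.single p c := by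
  funext q; by_cases h : q = p <;> simp [Pi.single_apply, h]

lemma eq_sum_single (x : Fin 3 × Fin 2 → ℂ) :
    x = ∑ p : Fin 3 × Fin 2, x p • (Pi.single p 1 : Fin 3 × Fin 2 → ℂ) := by
  conv_lhs => rw [← Finset.univ_sum_single x]
  exact Finset.sum_congr rfl fun p _ => (smul_single_one p (x p)).symm

lemma memE17 (s : Fin 2) (x : Fin 3 × Fin 2 → ℂ) :
    x ∈ E17 s ↔ ∀ p : Fin 3 × Fin 2, p.2 ≠ s → x p = 0 := by
  constructor
  · intro hx
    induction hx using Submodule.span_induction with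
    | mem y hy =>
      obtain ⟨i, rfl⟩ := hy
      intro p hp
      simp only [Pi.single_apply, Prod.ext_iff]
      rw [if_neg]
      rintro ⟨-, h⟩; exact hp h
    | zero => simp
    | add y z _ _ hy hz => intro p hp; simp [hy p hp, hz p hp]
    | smul c y _ hy => intro p hp; simp [hy p hp]
  · intro hx
    rw [eq_sum_single x]
    refine Submodule.sum_mem _ fun p _ => ?_
    obtain ⟨p1, p2⟩ := p
    by_cases h2 : p2 = s
    · subst h2
      exact Submodule.smul_mem _ _ (Submodule.subset_span ⟨p1, rfl⟩)
    · rw [hx (p1, p2) h2, zero_smul]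
      exact Submodule.zero_mem _

lemma smul_single_mem_cancel {𝒱 : Submodule ℂ (Fin 3 × Fin 2 → ℂ)} {c : ℂ} (hc : c ≠ 0)
    {p : Fin 3 × Fin 2} (h : c • (Pi.single p 1 : Fin 3 × Fin 2 → ℂ) ∈ 𝒱) :
    (Pi.single p 1 : Fin 3 × Fin 2 → ℂ) ∈ 𝒱 := by
  have h2 := 𝒱.smul_mem c⁻¹ h
  rwa [smul_smul, inv_mul_cancel₀ hc, one_smul] at h2

lemma step17_of_supported (j i : Fin 3) (s : Fin 2) (x : Fin 3 × Fin 2 → ℂ)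
    (hx : ∀ p : Fin 3 × Fin 2, p.2 ≠ s → x p = 0) :
    step17 j i x = (L17 j i s s * x (i, s)) • (Pi.single (j, s) 1 : Fin 3 × Fin 2 → ℂ) := by
  rw [step17_apply]
  funext p
  obtain ⟨p1, p2⟩ := p
  by_cases h2 : p2 = s
  · subst h2
    by_cases h1 : p1 = j <;> simp [h1, Pi.single_apply, Prod.ext_iff]
  · by_cases h1 : p1 = j <;>
      simp [h1, h2, hx (i, p2) h2, Pi.single_apply, Prod.ext_iff,
        L17_offdiag j i p2 s h2]

lemma single_mem_of_enclosure {𝒲 : Submodule ℂ (Fin 3 × Fin 2 → ℂ)}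
    (hW : IsEnclosure17 𝒲) {s : Fin 2} {x : Fin 3 × Fin 2 → ℂ} (hxW : x ∈ 𝒲)
    (hxE : ∀ p : Fin 3 × Fin 2, p.2 ≠ s → x p = 0) {i : Fin 3} (hx : x (i, s) ≠ 0)
    (k : Fin 3) : (Pi.single (k, s) 1 : Fin 3 × Fin 2 → ℂ) ∈ 𝒲 := by
  obtain ⟨j, hj⟩ : ∃ j : Fin 3, j ≠ i := by fin_cases i <;> decide
  have hy := hW j i x hxW
  rw [step17_of_supported j i s x hxE] at hy
  have hsj : (Pi.single (j, s) 1 : Fin 3 × Fin 2 → ℂ) ∈ 𝒲 :=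
    smul_single_mem_cancel (mul_ne_zero (L17_diag_ne j i hj s) hx) hy
  by_cases hk : k = j
  · subst hk; exact hsj
  · have hz := hW k j _ hsj
    rw [step17_single k j s] at hz
    exact smul_single_mem_cancel (L17_diag_ne k j hk s) hz

lemma enclosure_E17 (s : Fin 2) : IsEnclosure17 (E17 s) := by
  intro i j x hx
  rw [memE17] at hx ⊢
  intro p hp
  rw [step17_apply]
  by_cases h : p.1 = i
  · simp only [h, if_true, hx (j, p.2) hp, mul_zero]
  · simp [h]

/-- For the OQRW on three sites with the diagonal transition operators above,
each `ℂ e_k ⊗ ℓ²(V)` is a minimal enclosure, while the smallest enclosure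
containing `(e₁+e₂) ⊗ |1⟩` is the whole space. -/
theorem stmt17 :
    (∀ s : Fin 2, IsEnclosure17 (E17 s) ∧ E17 s ≠ ⊥ ∧
      ∀ 𝒲 : Submodule ℂ (Fin 3 × Fin 2 → ℂ),
        IsEnclosure17 𝒲 → 𝒲 ≤ E17 s → 𝒲 = ⊥ ∨ 𝒲 = E17 s) ∧
    sInf {𝒱 : Submodule ℂ (Fin 3 × Fin 2 → ℂ) | IsEnclosure17 𝒱 ∧ v17 ∈ 𝒱} = ⊤ := by
  constructor
  · intro s
    refine ⟨enclosure_E17 s, ?_, ?_⟩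
    · intro h
      have hmem : (Pi.single ((0 : Fin 3), s) 1 : Fin 3 × Fin 2 → ℂ) ∈ E17 s :=
        Submodule.subset_span ⟨0, rfl⟩
      rw [h, Submodule.mem_bot] at hmem
      have := congrFun hmem (0, s)
      simp at this
    · intro 𝒲 hW hle
      by_cases hbot : 𝒲 = ⊥
      · exact Or.inl hbot
      right
      obtain ⟨x, hxW, hx0⟩ := Submodule.exists_mem_ne_zero_of_ne_bot hbot
      have hxE := (memE17 s x).mp (hle hxW)
      have hex : ∃ p, x p ≠ 0 := by
        by_contra h; push_neg at h; exact hx0 (funext h)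
      obtain ⟨⟨i, t⟩, hp⟩ := hex
      have hts : t = s := by
        by_contra h; exact hp (hxE (i, t) h)
      subst hts
      refine le_antisymm hle ?_
      rw [E17, Submodule.span_le]
      rintro _ ⟨k, rfl⟩
      exact single_mem_of_enclosure hW hxW hxE hp k
  · refine le_antisymm le_top (le_sInf ?_)
    rintro 𝒱 ⟨henc, hv⟩
    -- chain of steps
    have hr : ((Real.sqrt 5 : ℝ) : ℂ)⁻¹ ≠ 0 := inv_ne_zero sqrt5_ne
    set r : ℂ := ((Real.sqrt 5 : ℝ) : ℂ)⁻¹ with hrdef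
    have hL10_0 : L17 1 0 0 0 = 2 * r := by simp [L17, B17, hrdef, mul_comm]
    have hL10_1 : L17 1 0 1 1 = r := by simp [L17, B17, hrdef]
    have hL21_0 : L17 2 1 0 0 = 2 * r := by simp [L17, B17, hrdef, mul_comm]
    have hL21_1 : L17 2 1 1 1 = r := by simp [L17, B17, hrdef]
    have hL02_0 : L17 0 2 0 0 = 2 * r := by simp [L17, B17, hrdef, mul_comm]
    have hL02_1 : L17 0 2 1 1 = r := by simp [L17, B17, hrdef]
    have h1 := henc 1 0 v17 hv
    have h2 := henc 2 1 _ h1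
    have h3 := henc 0 2 _ h2
    have e3 : step17 0 2 (step17 2 1 (step17 1 0 v17)) =
        (8 * r ^ 3) • (Pi.single ((0:Fin 3), (0:Fin 2)) 1 : Fin 3 × Fin 2 → ℂ) +
        (r ^ 3) • (Pi.single ((0:Fin 3), (1:Fin 2)) 1 : Fin 3 × Fin 2 → ℂ) := by
      rw [v17]
      simp only [step17_add, step17_smul, step17_single, smul_smul,
        hL10_0, hL10_1, hL21_0, hL21_1, hL02_0, hL02_1]
      module
    rw [e3] at h3
    have hs00 : (Pi.single ((0:Fin 3), (0:Fin 2)) 1 : Fin 3 × Fin 2 → ℂ) ∈ 𝒱 := by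
      have hdiff : ((8 * r ^ 3) • (Pi.single ((0:Fin 3), (0:Fin 2)) 1 : Fin 3 × Fin 2 → ℂ) +
          (r ^ 3) • (Pi.single ((0:Fin 3), (1:Fin 2)) 1 : Fin 3 × Fin 2 → ℂ))
          - (r ^ 3) • v17 =
          (7 * r ^ 3) • (Pi.single ((0:Fin 3), (0:Fin 2)) 1 : Fin 3 × Fin 2 → ℂ) := by
        rw [v17, smul_add]
        module
      have hmem := 𝒱.sub_mem h3 (𝒱.smul_mem (r ^ 3) hv)
      rw [hdiff] at hmem
      exact smul_single_mem_cancel (mul_ne_zero (by norm_num) (pow_ne_zero 3 hr)) hmem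
    have hs01 : (Pi.single ((0:Fin 3), (1:Fin 2)) 1 : Fin 3 × Fin 2 → ℂ) ∈ 𝒱 := by
      have : (Pi.single ((0:Fin 3), (1:Fin 2)) 1 : Fin 3 × Fin 2 → ℂ) = v17 - Pi.single (0, 0) 1 := by
        rw [v17]; abel
      rw [this]
      exact 𝒱.sub_mem hv hs00
    have hall : ∀ p : Fin 3 × Fin 2, (Pi.single p 1 : Fin 3 × Fin 2 → ℂ) ∈ 𝒱 := by
      rintro ⟨k, t⟩
      have hbase : (Pi.single ((0:Fin 3), t) 1 : Fin 3 × Fin 2 → ℂ) ∈ 𝒱 := by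
        fin_cases t
        · exact hs00
        · exact hs01
      by_cases hk : k = 0
      · subst hk; exact hbase
      · have hz := henc k 0 _ hbase
        rw [step17_single k 0 t] at hz
        exact smul_single_mem_cancel (L17_diag_ne k 0 hk t) hz
    intro x _
    rw [eq_sum_single x]
    exact Submodule.sum_mem _ fun p _ => 𝒱.smul_mem _ (hall p)
end

section
/- Consider the OQRW on V = {1,2} with 𝔥₁ = 𝔥₂ = ℂ², fixed p ∈ (0,1), and transitions L₁₁ = L₂₂ = √p·Id, L₁₂ = L₂₁ = √(1−p)·B where B is the 2×2 matrix swapping the basis vectors. Then a state ρ on ℂ² ⊗ ℂ² is 𝔐-invariant if and only if ρ = ρ₁ ⊗ |1⟩⟨1| + Bρ₁B ⊗ |2⟩⟨2| for some positive semidefinite 2×2 matrix ρ₁ with trace 1/2. -/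
/-!
Each Kraus term only sees one diagonal block: writing `ρ_k` for the block of `ρ` at site `k`,
`(L_{ij} ⊗ |i⟩⟨j|) ρ (L_{ij} ⊗ |i⟩⟨j|)* = L_{ij} ρ_j L_{ij}* ⊗ |i⟩⟨i|`. Hence `𝔐(ρ)` is
block diagonal with blocks `p ρ₁ + (1 - p) B ρ₂ B` and `p ρ₂ + (1 - p) B ρ₁ B`. Since `p < 1`, a
fixed point is therefore block diagonal with `ρ₂ = B ρ₁ B`, and every such matrix is fixed because
`B² = 1`. As `B` is a self-adjoint unitary, `ρ` is positive iff `ρ₁` is, and `tr ρ = 2 tr ρ₁`.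
-/

open Matrix Kronecker
open scoped ComplexOrder

/-- Transition operators: `L₁₁ = L₂₂ = √p·Id`, `L₁₂ = L₂₁ = √(1-p)·B` with `B`
the swap matrix. -/
noncomputable def L18 (p : ℝ) : Fin 2 → Fin 2 → Matrix (Fin 2) (Fin 2) ℂ :=
  fun i j =>
    if i = j then (Real.sqrt p : ℂ) • (1 : Matrix (Fin 2) (Fin 2) ℂ)
    else (Real.sqrt (1 - p) : ℂ) • !![0, 1; 1, 0]

/-- The OQRW `𝔐(ρ) = ∑_{i,j} (L_{i,j} ⊗ |i⟩⟨j|) ρ (L_{i,j} ⊗ |i⟩⟨j|)*` on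
`ℂ² ⊗ ℂ²` (index order: internal × site). -/
noncomputable def M18 (p : ℝ)
    (ρ : Matrix (Fin 2 × Fin 2) (Fin 2 × Fin 2) ℂ) :
    Matrix (Fin 2 × Fin 2) (Fin 2 × Fin 2) ℂ :=
  ∑ i : Fin 2, ∑ j : Fin 2,
    (L18 p i j ⊗ₖ Matrix.single i j (1 : ℂ)) * ρ *
      (L18 p i j ⊗ₖ Matrix.single i j (1 : ℂ))ᴴ

namespace Matrix

variable {R l m n : Type*}

section Kronecker

variable [Fintype n] [DecidableEq n]

theorem blockDiagonal_eq_sum_kronecker_single [Semiring R] (X : n → Matrix m m R) :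
    blockDiagonal X = ∑ i, X i ⊗ₖ single i i (1 : R) := by
  ext ⟨a, x⟩ ⟨b, y⟩
  rcases eq_or_ne x y with rfl | h
  · simp [sum_apply, kroneckerMap_apply, single_apply, blockDiagonal_apply]
  · simp only [blockDiagonal_apply, h, if_false, sum_apply, kroneckerMap_apply, single_apply,
      mul_ite, mul_one, mul_zero]
    exact (Finset.sum_eq_zero fun c _ => if_neg fun ⟨hx, hy⟩ => h (hx ▸ hy)).symm

theorem kronecker_single_mul_mul_conjTranspose [CommSemiring R] [StarRing R] [Fintype m]
    (A : Matrix l m R) (ρ : Matrix (m × n) (m × n) R) (i j : n) :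
    (A ⊗ₖ single i j 1) * ρ * (A ⊗ₖ single i j 1)ᴴ =
      (A * ρ.blockDiag j * Aᴴ) ⊗ₖ single i i 1 := by
  ext ⟨a, x⟩ ⟨b, y⟩
  rcases eq_or_ne i x with rfl | hx <;> rcases eq_or_ne i y with rfl | hy <;>
    simp [mul_apply, kroneckerMap_apply, conjTranspose_apply, single_apply,
      Fintype.sum_prod_type, blockDiag_apply, Finset.sum_mul, apply_ite star, mul_ite, *]

theorem PosSemidef.blockDiagonal {𝕜 : Type*} [RCLike 𝕜] [Fintype m] {X : n → Matrix m m 𝕜}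
    (hX : ∀ i, (X i).PosSemidef) : (blockDiagonal X).PosSemidef := by
  rw [blockDiagonal_eq_sum_kronecker_single]
  refine posSemidef_sum _ fun i _ => (hX i).kronecker ?_
  simpa [single_mul_single_same] using posSemidef_conjTranspose_mul_self (single i i (1 : 𝕜))

end Kronecker

theorem PosSemidef.blockDiag {𝕜 : Type*} [RCLike 𝕜] [Fintype m]
    {M : Matrix (m × n) (m × n) 𝕜} (hM : M.PosSemidef) (k : n) : (M.blockDiag k).PosSemidef :=
  hM.submatrix _

section Swap

variable [Fintype n] [DecidableEq n]

theorem swap_fin_two [Semiring R] : swap R (0 : Fin 2) 1 = !![0, 1; 1, 0] := by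
  ext i j
  fin_cases i <;> fin_cases j <;>
    simp [swap, Equiv.Perm.permMatrix, PEquiv.toMatrix, Equiv.swap_apply_def]

theorem swap_mul_swap_mul_mul_swap_mul_swap [Semiring R] (i j : n) (X : Matrix n n R) :
    swap R i j * (swap R i j * X * swap R i j) * swap R i j = X := by
  rw [← Matrix.mul_assoc, ← Matrix.mul_assoc, swap_mul_self, Matrix.one_mul, Matrix.mul_assoc,
    swap_mul_self, Matrix.mul_one]

theorem trace_swap_mul_mul_swap [CommSemiring R] (i j : n) (X : Matrix n n R) :
    (swap R i j * X * swap R i j).trace = X.trace := by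
  rw [trace_mul_cycle, swap_mul_self, Matrix.one_mul]

end Swap

theorem ofReal_sqrt_smul_mul_mul_conjTranspose [Fintype m] {r : ℝ} (hr : 0 ≤ r)
    (A X : Matrix m m ℂ) : ((√r : ℂ) • A) * X * ((√r : ℂ) • A)ᴴ = (r : ℂ) • (A * X * Aᴴ) := by
  rw [conjTranspose_smul, Complex.star_def, Complex.conj_ofReal, smul_mul_assoc, smul_mul_assoc,
    mul_smul_comm, smul_smul, ← Complex.ofReal_mul, Real.mul_self_sqrt hr, mul_assoc]

end Matrix

theorem ofReal_smul_add_one_sub_smul {E : Type*} [AddCommGroup E] [Module ℂ E] (p : ℝ) (x : E) :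
    (p : ℂ) • x + ((1 - p : ℝ) : ℂ) • x = x := by
  rw [← add_smul]
  simp

theorem L18_mul_mul_conjTranspose_self {p : ℝ} (hp0 : 0 ≤ p) (i : Fin 2)
    (X : Matrix (Fin 2) (Fin 2) ℂ) : L18 p i i * X * (L18 p i i)ᴴ = (p : ℂ) • X := by
  rw [L18, if_pos rfl, ofReal_sqrt_smul_mul_mul_conjTranspose hp0, conjTranspose_one,
    Matrix.one_mul, Matrix.mul_one]

theorem L18_mul_mul_conjTranspose_of_ne {p : ℝ} (hp1 : p ≤ 1) {i j : Fin 2} (hij : i ≠ j)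
    (X : Matrix (Fin 2) (Fin 2) ℂ) :
    L18 p i j * X * (L18 p i j)ᴴ = ((1 - p : ℝ) : ℂ) • (swap ℂ 0 1 * X * swap ℂ 0 1) := by
  rw [L18, if_neg hij, ← swap_fin_two, ofReal_sqrt_smul_mul_mul_conjTranspose (by linarith),
    conjTranspose_swap]

theorem M18_eq_blockDiagonal {p : ℝ} (hp0 : 0 ≤ p) (hp1 : p ≤ 1)
    (ρ : Matrix (Fin 2 × Fin 2) (Fin 2 × Fin 2) ℂ) :
    M18 p ρ = blockDiagonal
      ![(p : ℂ) • ρ.blockDiag 0 + ((1 - p : ℝ) : ℂ) • (swap ℂ 0 1 * ρ.blockDiag 1 * swap ℂ 0 1),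
        (p : ℂ) • ρ.blockDiag 1 + ((1 - p : ℝ) : ℂ) • (swap ℂ 0 1 * ρ.blockDiag 0 * swap ℂ 0 1)]
    := by
  simp only [M18, kronecker_single_mul_mul_conjTranspose, blockDiagonal_eq_sum_kronecker_single,
    Fin.sum_univ_two, L18_mul_mul_conjTranspose_self hp0,
    L18_mul_mul_conjTranspose_of_ne hp1 zero_ne_one,
    L18_mul_mul_conjTranspose_of_ne hp1 one_ne_zero, cons_val_zero, cons_val_one]
  rw [add_kronecker, add_kronecker, add_comm (_ ⊗ₖ single 1 1 1)]

theorem M18_blockDiagonal_swap {p : ℝ} (hp0 : 0 ≤ p) (hp1 : p ≤ 1)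
    (σ : Matrix (Fin 2) (Fin 2) ℂ) :
    M18 p (blockDiagonal ![σ, swap ℂ 0 1 * σ * swap ℂ 0 1]) =
      blockDiagonal ![σ, swap ℂ 0 1 * σ * swap ℂ 0 1] := by
  rw [M18_eq_blockDiagonal hp0 hp1, blockDiag_blockDiagonal]
  simp only [cons_val_zero, cons_val_one, swap_mul_swap_mul_mul_swap_mul_swap,
    ofReal_smul_add_one_sub_smul]

theorem M18_eq_self_iff {p : ℝ} (hp0 : 0 ≤ p) (hp1 : p < 1)
    (ρ : Matrix (Fin 2 × Fin 2) (Fin 2 × Fin 2) ℂ) :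
    M18 p ρ = ρ ↔ ∃ σ, ρ = blockDiagonal ![σ, swap ℂ 0 1 * σ * swap ℂ 0 1] := by
  refine ⟨fun h => ⟨ρ.blockDiag 0, ?_⟩, fun ⟨σ, hσ⟩ => hσ ▸ M18_blockDiagonal_swap hp0 hp1.le σ⟩
  have hM := M18_eq_blockDiagonal hp0 hp1.le ρ
  have hρ₁ : ρ.blockDiag 1 = swap ℂ 0 1 * ρ.blockDiag 0 * swap ℂ 0 1 := by
    have hfix := congrArg (blockDiag · 1) (hM.symm.trans h)
    simp only [blockDiag_blockDiagonal, cons_val_one, cons_val_zero] at hfix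
    have hp : ((1 - p : ℝ) : ℂ) ≠ 0 := Complex.ofReal_ne_zero.mpr (by linarith)
    refine smul_right_injective _ hp (add_left_cancel (a := (p : ℂ) • ρ.blockDiag 1) ?_)
    exact (ofReal_smul_add_one_sub_smul p _).trans hfix.symm
  calc ρ = M18 p ρ := h.symm
    _ = _ := by
      rw [hM, hρ₁]
      simp only [swap_mul_swap_mul_mul_swap_mul_swap, ofReal_smul_add_one_sub_smul]

theorem posSemidef_blockDiagonal_swap_iff (σ : Matrix (Fin 2) (Fin 2) ℂ) :
    (blockDiagonal ![σ, swap ℂ 0 1 * σ * swap ℂ 0 1]).PosSemidef ↔ σ.PosSemidef := by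
  refine ⟨fun h => ?_, fun h => PosSemidef.blockDiagonal fun i => ?_⟩
  · simpa [blockDiag_blockDiagonal] using h.blockDiag 0
  · fin_cases i
    · exact h
    · simpa using h.conjTranspose_mul_mul_same (swap ℂ 0 1)

theorem trace_blockDiagonal_swap (σ : Matrix (Fin 2) (Fin 2) ℂ) :
    (blockDiagonal ![σ, swap ℂ 0 1 * σ * swap ℂ 0 1]).trace = 2 * σ.trace := by
  rw [trace_blockDiagonal, Fin.sum_univ_two, cons_val_zero, cons_val_one, cons_val_zero,
    trace_swap_mul_mul_swap, two_mul]

/-- A state `ρ` is invariant for the two-site OQRW above iff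
`ρ = ρ₁ ⊗ |1⟩⟨1| + Bρ₁B ⊗ |2⟩⟨2|` for some positive semidefinite `ρ₁` with
trace `1/2`. -/
theorem stmt18 (p : ℝ) (hp : 0 < p) (hp1 : p < 1)
    (ρ : Matrix (Fin 2 × Fin 2) (Fin 2 × Fin 2) ℂ) :
    (ρ.PosSemidef ∧ ρ.trace = 1 ∧ M18 p ρ = ρ) ↔
    (∃ ρ₁ : Matrix (Fin 2) (Fin 2) ℂ, ρ₁.PosSemidef ∧ ρ₁.trace = 1 / 2 ∧
      ρ = ρ₁ ⊗ₖ Matrix.single (0 : Fin 2) (0 : Fin 2) (1 : ℂ) +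
        (!![0, 1; 1, 0] * ρ₁ * !![0, 1; 1, 0]) ⊗ₖ
          Matrix.single (1 : Fin 2) (1 : Fin 2) (1 : ℂ)) := by
  have hform (σ : Matrix (Fin 2) (Fin 2) ℂ) :
      σ ⊗ₖ single 0 0 1 + (!![0, 1; 1, 0] * σ * !![0, 1; 1, 0]) ⊗ₖ single 1 1 1 =
        blockDiagonal ![σ, swap ℂ 0 1 * σ * swap ℂ 0 1] := by
    rw [blockDiagonal_eq_sum_kronecker_single, Fin.sum_univ_two, swap_fin_two]
    rfl
  simp only [hform, M18_eq_self_iff hp.le hp1]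
  constructor
  · rintro ⟨hρ, htr, σ, rfl⟩
    rw [trace_blockDiagonal_swap] at htr
    exact ⟨σ, (posSemidef_blockDiagonal_swap_iff σ).mp hρ, by linear_combination htr / 2, rfl⟩
  · rintro ⟨σ, hσ, htr, rfl⟩
    refine ⟨(posSemidef_blockDiagonal_swap_iff σ).mpr hσ, ?_, σ, rfl⟩
    rw [trace_blockDiagonal_swap, htr]
    norm_num
end

section
/- Let (m_n) be a martingale with values in a finite-dimensional normed space whose increments are uniformly bounded: ‖m_{n+1} − m_n‖ ≤ C almost surely for all n. Then m_n / n → 0 almost surely as n → ∞. -/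
/-!
Each coordinate of `m` is a real martingale with increments bounded by `C`. Its martingale
transform `h n = ∑_{k<n} (m_{k+1} - m_k) / (k + 1)` has orthogonal increments, so
`E[h n ^ 2] ≤ C² ∑ 1/k²` stays bounded; hence `h` is bounded in `L¹` and converges almost surely
by Doob's theorem. Kronecker's lemma then turns the convergence of `h` into `m_n / n → 0`.
-/

open MeasureTheory Filter Finset
open scoped Topology

/-- Kronecker's lemma. With `b n = ∑_{k<n} u k / (k + 1)`, Abel summation gives
`∑_{k<n} u k = n b n - ∑_{k<n} b k`, and the Cesàro means of `b` have the same limit as `b`. -/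
theorem tendsto_inv_mul_sum_of_tendsto_sum_inv_succ_mul {u : ℕ → ℝ} {L : ℝ}
    (h : Tendsto (fun n : ℕ => ∑ k ∈ range n, ((k : ℝ) + 1)⁻¹ * u k) atTop (𝓝 L)) :
    Tendsto (fun n : ℕ => (n : ℝ)⁻¹ * ∑ k ∈ range n, u k) atTop (𝓝 0) := by
  set b : ℕ → ℝ := fun n => ∑ k ∈ range n, ((k : ℝ) + 1)⁻¹ * u k
  have abel : ∀ n : ℕ, ∑ k ∈ range n, u k = n * b n - ∑ k ∈ range n, b k := by
    intro n
    induction n with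
    | zero => simp
    | succ n ih =>
      have hb : b (n + 1) = b n + ((n : ℝ) + 1)⁻¹ * u n := sum_range_succ _ _
      rw [sum_range_succ, sum_range_succ, ih, hb]
      push_cast
      field_simp
      ring
  have hlim := h.sub h.cesaro
  rw [sub_self] at hlim
  refine hlim.congr' ?_
  filter_upwards [eventually_ne_atTop 0] with n hn
  rw [abel n, mul_sub, ← mul_assoc, inv_mul_cancel₀ (Nat.cast_ne_zero.2 hn), one_mul]

namespace MeasureTheory

variable {Ω : Type*} {m0 : MeasurableSpace Ω} {μ : Measure Ω}

theorem Integrable.sq_of_ae_abs_le {f : Ω → ℝ} {K : ℝ} (hf : Integrable f μ)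
    (hK : ∀ᵐ ω ∂μ, |f ω| ≤ K) : Integrable (fun ω => f ω ^ 2) μ := by
  simpa only [sq] using hf.bdd_mul hf.aestronglyMeasurable hK

theorem ae_abs_le_sum_of_abs_sub_le {h : ℕ → Ω → ℝ} {c : ℕ → ℝ} (h0 : h 0 = 0)
    (hc : ∀ k, ∀ᵐ ω ∂μ, |h (k + 1) ω - h k ω| ≤ c k) (n : ℕ) :
    ∀ᵐ ω ∂μ, |h n ω| ≤ ∑ k ∈ range n, c k := by
  induction n with
  | zero => simp [h0]
  | succ n ih =>
    filter_upwards [ih, hc n] with ω hn hstep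
    rw [sum_range_succ]
    linarith [abs_sub_abs_le_abs_sub (h (n + 1) ω) (h n ω)]

theorem Martingale.comp_continuousLinearMap {ι E F : Type*} [Preorder ι] {ℱ : Filtration ι m0}
    [NormedAddCommGroup E] [NormedSpace ℝ E] [CompleteSpace E]
    [NormedAddCommGroup F] [NormedSpace ℝ F] [CompleteSpace F]
    {f : ι → Ω → E} (hf : Martingale f ℱ μ) (T : E →L[ℝ] F) :
    Martingale (fun i ω => T (f i ω)) ℱ μ :=
  ⟨fun i => T.continuous.comp_stronglyMeasurable (hf.stronglyAdapted i), fun _ j hij =>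
    (T.comp_condExp_comm (hf.integrable j)).symm.trans ((hf.condExp_ae_eq hij).fun_comp T)⟩

variable {ℱ : Filtration ℕ m0}

theorem Martingale.sum_mul_sub [IsFiniteMeasure μ] {R : ℝ} {ξ g : ℕ → Ω → ℝ}
    (hg : Martingale g ℱ μ) (hξ : StronglyAdapted ℱ ξ) (hbdd : ∀ n ω, ξ n ω ≤ R)
    (hnonneg : ∀ n ω, 0 ≤ ξ n ω) :
    Martingale (fun n => ∑ k ∈ range n, ξ k * (g (k + 1) - g k)) ℱ μ := by
  refine martingale_iff.2 ⟨?_, hg.submartingale.sum_mul_sub hξ hbdd hnonneg⟩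
  convert (hg.neg.submartingale.sum_mul_sub hξ hbdd hnonneg).neg using 1
  ext n ω
  simp only [Pi.neg_apply, Finset.sum_apply, Pi.mul_apply, Pi.sub_apply, ← sum_neg_distrib]
  exact sum_congr rfl fun k _ => by ring

theorem Martingale.integral_mul_sub_eq_zero [IsFiniteMeasure μ] {g : ℕ → Ω → ℝ}
    (hg : Martingale g ℱ μ) {X : Ω → ℝ} {n : ℕ} (hX : StronglyMeasurable[ℱ n] X)
    (hXg : Integrable (X * (g (n + 1) - g n)) μ) :
    ∫ ω, X ω * (g (n + 1) ω - g n ω) ∂μ = 0 := by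
  have hint := (hg.integrable (n + 1)).sub (hg.integrable n)
  have hΔ : μ[g (n + 1) - g n | ℱ n] =ᵐ[μ] 0 := by
    filter_upwards [condExp_sub (hg.integrable (n + 1)) (hg.integrable n) (ℱ n),
      hg.condExp_ae_eq n.le_succ] with ω hsub hsucc
    simp [hsub, hsucc,
      condExp_of_stronglyMeasurable (ℱ.le n) (hg.stronglyAdapted n) (hg.integrable n)]
  calc ∫ ω, X ω * (g (n + 1) ω - g n ω) ∂μ = ∫ ω, μ[X * (g (n + 1) - g n) | ℱ n] ω ∂μ :=
        (integral_condExp (ℱ.le n)).symm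
    _ = ∫ ω, (X * μ[g (n + 1) - g n | ℱ n]) ω ∂μ :=
        integral_congr_ae (condExp_mul_of_stronglyMeasurable_left hX hXg hint)
    _ = ∫ _, 0 ∂μ := integral_congr_ae (hΔ.mono fun ω hω => by simp [hω])
    _ = 0 := integral_zero _ _

theorem Martingale.integral_sq_le_sum_sq [IsProbabilityMeasure μ] {h : ℕ → Ω → ℝ} {c : ℕ → ℝ}
    (hh : Martingale h ℱ μ) (h0 : h 0 = 0) (hc : ∀ k, ∀ᵐ ω ∂μ, |h (k + 1) ω - h k ω| ≤ c k)
    (n : ℕ) : ∫ ω, h n ω ^ 2 ∂μ ≤ ∑ k ∈ range n, c k ^ 2 := by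
  induction n with
  | zero => simp [h0]
  | succ n ih =>
    have hbound := ae_abs_le_sum_of_abs_sub_le h0 hc n
    have hΔ : Integrable (h (n + 1) - h n) μ := (hh.integrable (n + 1)).sub (hh.integrable n)
    have hcross : Integrable (fun ω => h n ω * (h (n + 1) ω - h n ω)) μ :=
      hΔ.bdd_mul (hh.integrable n).aestronglyMeasurable hbound
    have hcross2 : Integrable (fun ω => 2 * (h n ω * (h (n + 1) ω - h n ω))) μ :=
      hcross.const_mul 2
    have hsq : Integrable (fun ω => h n ω ^ 2) μ := (hh.integrable n).sq_of_ae_abs_le hbound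
    have hΔsq : Integrable (fun ω => (h (n + 1) ω - h n ω) ^ 2) μ := hΔ.sq_of_ae_abs_le (hc n)
    have hsq_add_cross : Integrable
        (fun ω => h n ω ^ 2 + 2 * (h n ω * (h (n + 1) ω - h n ω))) μ :=
      hsq.add hcross2
    have hΔsq_le : ∫ ω, (h (n + 1) ω - h n ω) ^ 2 ∂μ ≤ c n ^ 2 := by
      refine (integral_mono_ae hΔsq (integrable_const (c n ^ 2))
        ((hc n).mono fun ω hω => ?_)).trans_eq (by simp)
      exact sq_le_sq' (abs_le.1 hω).1 (abs_le.1 hω).2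
    have hexpand : (fun ω => h (n + 1) ω ^ 2) = fun ω => (h n ω ^ 2
        + 2 * (h n ω * (h (n + 1) ω - h n ω))) + (h (n + 1) ω - h n ω) ^ 2 := by
      funext ω; ring
    rw [hexpand, integral_add hsq_add_cross hΔsq, integral_add hsq hcross2,
      integral_const_mul, hh.integral_mul_sub_eq_zero (hh.stronglyAdapted n) hcross,
      sum_range_succ]
    linarith

theorem Martingale.exists_ae_tendsto_of_summable_sq [IsProbabilityMeasure μ] {h : ℕ → Ω → ℝ}
    {c : ℕ → ℝ} (hh : Martingale h ℱ μ) (h0 : h 0 = 0)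
    (hc : ∀ k, ∀ᵐ ω ∂μ, |h (k + 1) ω - h k ω| ≤ c k) (hsum : Summable fun k => c k ^ 2) :
    ∀ᵐ ω ∂μ, ∃ a, Tendsto (fun n => h n ω) atTop (𝓝 a) := by
  set T := ∑' k, c k ^ 2
  refine hh.submartingale.exists_ae_tendsto_of_bdd (R := ((1 + T) / 2).toNNReal) fun n => ?_
  have hsq := (hh.integrable n).sq_of_ae_abs_le (ae_abs_le_sum_of_abs_sub_le h0 hc n)
  rw [eLpNorm_one_eq_lintegral_enorm, ← ofReal_integral_norm_eq_lintegral_enorm (hh.integrable n)]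
  refine ENNReal.ofReal_le_ofReal ?_
  -- `|x| ≤ (1 + x ^ 2) / 2` turns the `L²` bound into an `L¹` bound.
  calc ∫ ω, ‖h n ω‖ ∂μ ≤ ∫ ω, (1 + h n ω ^ 2) / 2 ∂μ := by
        refine integral_mono (hh.integrable n).norm (((integrable_const 1).add hsq).div_const 2)
          fun ω => ?_
        rw [Real.norm_eq_abs]
        nlinarith [sq_nonneg (|h n ω| - 1), sq_abs (h n ω)]
    _ = (1 + ∫ ω, h n ω ^ 2 ∂μ) / 2 := by
        rw [integral_div, integral_add (integrable_const 1) hsq]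
        simp
    _ ≤ (1 + T) / 2 := by
        gcongr
        exact (hh.integral_sq_le_sum_sq h0 hc n).trans
          (hsum.sum_le_tsum _ fun k _ => sq_nonneg _)

theorem Martingale.ae_tendsto_inv_mul_of_abs_sub_le [IsProbabilityMeasure μ] {g : ℕ → Ω → ℝ}
    (hg : Martingale g ℱ μ) {C : ℝ} (hC : ∀ n, ∀ᵐ ω ∂μ, |g (n + 1) ω - g n ω| ≤ C) :
    ∀ᵐ ω ∂μ, Tendsto (fun n : ℕ => (n : ℝ)⁻¹ * g n ω) atTop (𝓝 0) := by
  set h : ℕ → Ω → ℝ :=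
    fun n => ∑ k ∈ range n, (fun _ => ((k : ℝ) + 1)⁻¹) * (g (k + 1) - g k) with h_def
  have hh : Martingale h ℱ μ :=
    hg.sum_mul_sub (stronglyAdapted_const' ℱ fun k : ℕ => ((k : ℝ) + 1)⁻¹)
      (fun k _ => inv_le_one_of_one_le₀ (by simp)) fun k _ => by positivity
  have hinc : ∀ k, ∀ᵐ ω ∂μ, |h (k + 1) ω - h k ω| ≤ C * ((k : ℝ) + 1)⁻¹ := fun k => by
    filter_upwards [hC k] with ω hω
    simp only [h_def, sum_range_succ, Finset.sum_apply, Pi.mul_apply, Pi.sub_apply,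
      add_sub_cancel_left, abs_mul, abs_inv]
    rw [abs_of_pos (by positivity), mul_comm]
    exact mul_le_mul_of_nonneg_right hω (by positivity)
  have hsum : Summable fun k : ℕ => (C * ((k : ℝ) + 1)⁻¹) ^ 2 := by
    refine (((summable_nat_add_iff 1).2 (Real.summable_one_div_nat_pow.2 one_lt_two)).mul_left
      (C ^ 2)).congr fun k => ?_
    push_cast
    rw [mul_pow, one_div, inv_pow]
  filter_upwards [hh.exists_ae_tendsto_of_summable_sq (by simp [h_def]) hinc hsum]
    with ω ⟨a, ha⟩
  have hkron := tendsto_inv_mul_sum_of_tendsto_sum_inv_succ_mul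
    (u := fun k => g (k + 1) ω - g k ω) (by simpa [h_def] using ha)
  have hinit : Tendsto (fun n : ℕ => (n : ℝ)⁻¹ * g 0 ω) atTop (𝓝 0) := by
    simpa using tendsto_inv_atTop_nhds_zero_nat.mul_const (g 0 ω)
  refine (add_zero (0 : ℝ) ▸ hkron.add hinit).congr fun n => ?_
  rw [sum_range_sub (fun k => g k ω)]
  ring

end MeasureTheory

/-- Law of large numbers for martingales with uniformly bounded increments:
if `(m_n)` is a martingale with values in `ℝ^d` and `‖m_{n+1} − m_n‖ ≤ C`
almost surely for every `n`, then `m_n / n → 0` almost surely. -/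
theorem stmt19 {Ω : Type*} {m0 : MeasurableSpace Ω} {μ : Measure Ω}
    [IsProbabilityMeasure μ] {ℱ : Filtration ℕ m0} {d : ℕ}
    (f : ℕ → Ω → EuclideanSpace ℝ (Fin d))
    (hf : Martingale f ℱ μ) (C : ℝ)
    (hC : ∀ n : ℕ, ∀ᵐ ω ∂μ, ‖f (n + 1) ω - f n ω‖ ≤ C) :
    ∀ᵐ ω ∂μ, Tendsto (fun n : ℕ => (n : ℝ)⁻¹ • f n ω) atTop (nhds 0) := by
  have hcoord : ∀ i : Fin d, ∀ᵐ ω ∂μ,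
      Tendsto (fun n : ℕ => (n : ℝ)⁻¹ * f n ω i) atTop (𝓝 0) := fun i =>
    (hf.comp_continuousLinearMap (EuclideanSpace.proj i)).ae_tendsto_inv_mul_of_abs_sub_le
      fun n => (hC n).mono fun ω hω => (PiLp.norm_apply_le (f (n + 1) ω - f n ω) i).trans hω
  filter_upwards [ae_all_iff.2 hcoord] with ω hω
  convert ((PiLp.continuous_toLp 2 _).tendsto 0).comp (tendsto_pi_nhds.2 hω) using 1
  · ext n i
    simp
  · rfl
end
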